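/- arXiv:math/0702352 — 4 statements merged into one kernel-verified Lean document; each statement's English description precedes it below -/
import Mathlib

section
/- Let k, ℓ ∈ ℕ and let G be an ordered graph. If G contains no k-structure of Type 1, no k-structure of Type 2, and no (k,ℓ)-structure of Type 3, then the vertex set of G can be partitioned into blocks B_1 < … < B_m of consecutive vertices with m ≤ 256k⁴ and each block ℓ-homogeneous. -/
open Finset

/-- `IndSub G H` : `G` is an induced ordered subgraph of `H`, i.e. there is an
order-preserving injection of the vertices preserving adjacency and non-adjacency. -/
def IndSub {m n : ℕ} (G : SimpleGraph (Fin m)) (H : SimpleGraph (Fin n)) : Prop :=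
  ∃ φ : Fin m ↪o Fin n, ∀ i j : Fin m, G.Adj i j ↔ H.Adj (φ i) (φ j)

/-- A hereditary property of ordered graphs: a family of ordered graphs (one set of
graphs on `[n]` for each `n`), closed under taking induced ordered subgraphs.  (Closure
under order-preserving isomorphisms is automatic in this encoding, since the only
order-preserving bijection of `Fin n` is the identity.) -/
structure HerProp where
  mem : ∀ n : ℕ, Set (SimpleGraph (Fin n))
  hered : ∀ {m n : ℕ} (G : SimpleGraph (Fin m)) (H : SimpleGraph (Fin n)),
    IndSub G H → H ∈ mem n → G ∈ mem m

/-- The speed of a property: `n ↦ |P_n|`. -/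
noncomputable def speed (P : HerProp) (n : ℕ) : ℕ := (P.mem n).ncard

/-- Generalized Fibonacci numbers `F_{n,k}` of order `k`:
`F_{0,k} = 1`, `F_{n,k} = F_{n-1,k} + ⋯ + F_{n-k,k}` (terms with negative index are 0). -/
def genFib (k : ℕ) : ℕ → ℕ
  | 0 => 1
  | n + 1 => ∑ i ∈ Finset.range k, if i ≤ n then genFib k (n - i) else 0
decreasing_by omega

/-- `lHom G ℓ x y` : vertices `x` and `y` are `ℓ`-homogeneous in `G`
(`x ∼_ℓ y`), i.e. they have the same neighbourhoods outside `N_ℓ(x) ∪ N_ℓ(y)`. -/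
def lHom {N : ℕ} (G : SimpleGraph (Fin N)) (ℓ : ℕ) (x y : Fin N) : Prop :=
  ∀ v : Fin N, ℓ ≤ ((v : ℤ) - (x : ℤ)).natAbs → ℓ ≤ ((v : ℤ) - (y : ℤ)).natAbs →
    (G.Adj x v ↔ G.Adj y v)

/-- `G` contains a `k`-structure of Type 1. -/
def HasType1 {N : ℕ} (G : SimpleGraph (Fin N)) (k : ℕ) : Prop :=
  ∃ (y : Fin N) (x : Fin (2 * k) → Fin N), StrictMono x ∧
    ((∀ i, y < x i) ∨ (∀ i, x i < y)) ∧
    ∀ i j : Fin (2 * k), (j : ℕ) = (i : ℕ) + 1 → (G.Adj y (x i) ↔ ¬ G.Adj y (x j))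

/-- `G` contains a `k`-structure of Type 2 (2(a) or 2(b)). -/
def HasType2 {N : ℕ} (G : SimpleGraph (Fin N)) (k : ℕ) : Prop :=
  ∃ x y : Fin (2 * k) → Fin N, StrictMono x ∧ (StrictMono y ∨ StrictAnti y) ∧
    (∀ i j, x i < y j) ∧
    ∀ i j : Fin (2 * k), (j : ℕ) = (i : ℕ) + 1 → (G.Adj (x i) (y i) ↔ ¬ G.Adj (x j) (y j))

/-- `G` contains a `(k,ℓ)`-structure of Type 3. -/
def HasType3 {N : ℕ} (G : SimpleGraph (Fin N)) (k ℓ : ℕ) : Prop :=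
  ∃ (x y : Fin (2 * k) → Fin N) (z : Fin (2 * k) → Fin (ℓ - 1) → Fin N),
    (∀ i t, x i < z i t) ∧ (∀ i, StrictMono (z i)) ∧ (∀ i t, z i t < y i) ∧
    (∀ i, x i < y i) ∧
    (∀ i j : Fin (2 * k), (j : ℕ) = (i : ℕ) + 1 → y i < x j) ∧
    ∀ i j : Fin (2 * k), (j : ℕ) = (i : ℕ) + 1 → (G.Adj (x i) (y i) ↔ ¬ G.Adj (x j) (y j))

/-- `S_n(G)` : the number of pairwise non-isomorphic (as ordered graphs) induced ordered
subgraphs of `G` of order `n`. -/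
noncomputable def numSub {N : ℕ} (G : SimpleGraph (Fin N)) (n : ℕ) : ℕ :=
  {H : SimpleGraph (Fin n) | IndSub H G}.ncard
/-- The ordered graph `M^<_I(X,Y)` with `|X| = |Y| = m` (vertices `0,…,m-1` playing the
role of `x_1 < … < x_m` and vertices `m,…,2m-1` the role of `y_1 < … < y_m`). -/
def Mlt (m : ℕ) (I1 I2 I3 I4 : Bool) : SimpleGraph (Fin (2 * m)) :=
  SimpleGraph.fromRel (fun u v =>
    ((u : ℕ) < m ∧ (v : ℕ) < m ∧ I1 = true) ∨
    (m ≤ (u : ℕ) ∧ m ≤ (v : ℕ) ∧ I4 = true) ∨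
    ((u : ℕ) < m ∧ m ≤ (v : ℕ) ∧
      (((u : ℕ) < (v : ℕ) - m ∧ I2 = true) ∨
       ((v : ℕ) - m < (u : ℕ) ∧ I3 = true) ∨
       ((u : ℕ) = (v : ℕ) - m ∧ Even (u : ℕ)))))

/-- The ordered graph `M^>_I(X,Y)`: as `M^<_I(X,Y)` but with the `y`-indices reversed,
i.e. vertex `m + p` plays the role of `y_{m-p}` (so that `y_1 > y_2 > … > y_m`). -/
def Mgt (m : ℕ) (I1 I2 I3 I4 : Bool) : SimpleGraph (Fin (2 * m)) :=
  SimpleGraph.fromRel (fun u v =>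
    ((u : ℕ) < m ∧ (v : ℕ) < m ∧ I1 = true) ∨
    (m ≤ (u : ℕ) ∧ m ≤ (v : ℕ) ∧ I4 = true) ∨
    ((u : ℕ) < m ∧ m ≤ (v : ℕ) ∧
      (((u : ℕ) < 2 * m - 1 - (v : ℕ) ∧ I2 = true) ∨
       (2 * m - 1 - (v : ℕ) < (u : ℕ) ∧ I3 = true) ∨
       ((u : ℕ) = 2 * m - 1 - (v : ℕ) ∧ Even (u : ℕ)))))

/-- `B` is a set of consecutive vertices which is pairwise 1-homogeneous. -/
def IsHomInterval {N : ℕ} (G : SimpleGraph (Fin N)) (B : Set (Fin N)) : Prop :=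
  (∀ x y z : Fin N, x ∈ B → z ∈ B → x ≤ y → y ≤ z → y ∈ B) ∧
  (∀ x ∈ B, ∀ y ∈ B, lHom G 1 x y)

/-- A homogeneous block of `G`: a maximal 1-homogeneous set of consecutive vertices. -/
def IsHomBlock {N : ℕ} (G : SimpleGraph (Fin N)) (B : Set (Fin N)) : Prop :=
  B.Nonempty ∧ IsHomInterval G B ∧ ∀ B' : Set (Fin N), B ⊆ B' → IsHomInterval G B' → B = B'

/-- `G` has at most `k` homogeneous blocks. -/
def HomBlocksLE {N : ℕ} (G : SimpleGraph (Fin N)) (k : ℕ) : Prop :=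
  {B : Set (Fin N) | IsHomBlock G B}.ncard ≤ k

/-- `TailBound G k M` : the homogeneous block sequence `t_1 ≥ t_2 ≥ …` of `G` satisfies
`Σ_{i=k+2}^∞ t_i ≤ M`, i.e. some (equivalently, the largest) `k+1` homogeneous blocks
cover all but at most `M` vertices. -/
def TailBound {N : ℕ} (G : SimpleGraph (Fin N)) (k M : ℕ) : Prop :=
  ∃ S : Finset (Set (Fin N)), S.card ≤ k + 1 ∧ (∀ B ∈ S, IsHomBlock G B) ∧
    {v : Fin N | ∀ B ∈ S, v ∉ B}.ncard ≤ M

/-- An ordered graph is irreducible if no pair of vertices `u < v` separates its edges. -/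
def IrredGraph {N : ℕ} (G : SimpleGraph (Fin N)) : Prop :=
  ¬ ∃ u v : Fin N, u < v ∧
      ∀ i j : Fin N, i < j → G.Adj i j → ((j : ℕ) ≤ (u : ℕ) ∨ (v : ℕ) ≤ (i : ℕ))

/-- `G` is `ℓ`-empty: it has no edges of length at least `ℓ`. -/
def lEmpty {N : ℕ} (G : SimpleGraph (Fin N)) (ℓ : ℕ) : Prop :=
  ∀ u v : Fin N, G.Adj u v → ((u : ℤ) - (v : ℤ)).natAbs < ℓ

/-- `IsFamSum G sz Gs` : `G = G_1 + … + G_s`, the consecutive sum of the ordered graphs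
`Gs 0, …, Gs (s-1)` (of orders `sz 0, …, sz (s-1)`), with no edges between summands. -/
def IsFamSum {N s : ℕ} (G : SimpleGraph (Fin N)) (sz : Fin s → ℕ)
    (Gs : ∀ i, SimpleGraph (Fin (sz i))) : Prop :=
  N = ∑ i, sz i ∧
  ∀ u v : Fin N, G.Adj u v ↔ ∃ (i : Fin s) (x y : Fin (sz i)),
    (Gs i).Adj x y ∧
    (u : ℕ) = (∑ j ∈ Finset.univ.filter (fun j => j < i), sz j) + (x : ℕ) ∧
    (v : ℕ) = (∑ j ∈ Finset.univ.filter (fun j => j < i), sz j) + (y : ℕ)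

/-- `(Gs 0, …, Gs (s-1))` is the irreducible block decomposition of `G`:
`G = G_1 + ⋯ + G_s` with every block nonempty and irreducible.  (Such a
decomposition is unique.) -/
def IsIrredDecomp {N s : ℕ} (G : SimpleGraph (Fin N)) (sz : Fin s → ℕ)
    (Gs : ∀ i, SimpleGraph (Fin (sz i))) : Prop :=
  IsFamSum G sz Gs ∧ (∀ i, 1 ≤ sz i) ∧ ∀ i, IrredGraph (Gs i)

/-- `J_1^{(n)} = K_n`. -/
def Jgraph1 (n : ℕ) : SimpleGraph (Fin n) := ⊤

/-- `J_2^{(n)}` : single edge `{1,n}`. -/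
def Jgraph2 (n : ℕ) : SimpleGraph (Fin n) :=
  SimpleGraph.fromRel (fun u v => (u : ℕ) = 0 ∧ (v : ℕ) = n - 1)

/-- `J_3^{(n)}` : star at the first vertex. -/
def Jgraph3 (n : ℕ) : SimpleGraph (Fin n) :=
  SimpleGraph.fromRel (fun u _ => (u : ℕ) = 0)

/-- `J_4^{(n)}` : star at the last vertex. -/
def Jgraph4 (n : ℕ) : SimpleGraph (Fin n) :=
  SimpleGraph.fromRel (fun _ v => (v : ℕ) = n - 1)

/-- `L^{(n)}` : the monotone path. -/
def Lgraph (n : ℕ) : SimpleGraph (Fin n) :=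
  SimpleGraph.fromRel (fun u v => (v : ℕ) = (u : ℕ) + 1)

/-- `Q_1` : edge set `{13, 24}` on `[4]`. -/
def Qgraph1 : SimpleGraph (Fin 4) :=
  SimpleGraph.fromRel (fun u v => ((u : ℕ) = 0 ∧ (v : ℕ) = 2) ∨ ((u : ℕ) = 1 ∧ (v : ℕ) = 3))

/-- `Q_2` : edge set `{14, 23}` on `[4]`. -/
def Qgraph2 : SimpleGraph (Fin 4) :=
  SimpleGraph.fromRel (fun u v => ((u : ℕ) = 0 ∧ (v : ℕ) = 3) ∨ ((u : ℕ) = 1 ∧ (v : ℕ) = 2))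

/-- `G` is order-isomorphic to a member of the family `𝒥`. -/
def InJ {n : ℕ} (G : SimpleGraph (Fin n)) : Prop :=
  G = Jgraph1 n ∨ G = Jgraph2 n ∨ G = Jgraph3 n ∨ G = Jgraph4 n ∨ G = Lgraph n ∨
  (n = 4 ∧ IndSub G Qgraph1) ∨ (n = 4 ∧ IndSub G Qgraph2)

/-- `G` is order-isomorphic to a member of `𝒥_ℓ`. -/
def InJle (ℓ : ℕ) {n : ℕ} (G : SimpleGraph (Fin n)) : Prop :=
  (n ≤ ℓ ∧ (G = Jgraph1 n ∨ G = Jgraph2 n ∨ G = Jgraph3 n ∨ G = Jgraph4 n ∨ G = Lgraph n)) ∨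
  (4 ≤ ℓ ∧ n = 4 ∧ (IndSub G Qgraph1 ∨ IndSub G Qgraph2))

/-- `A` is a sum `B_1 + ⋯ + B_t` of members of `𝒥_ℓ` which are pairwise comparable in
the induced ordered subgraph order. -/
def InJA (ℓ : ℕ) {n : ℕ} (A : SimpleGraph (Fin n)) : Prop :=
  ∃ (t : ℕ) (sz : Fin t → ℕ) (Bs : ∀ j, SimpleGraph (Fin (sz j))),
    IsFamSum A sz Bs ∧ (∀ j, InJle ℓ (Bs j)) ∧
    ∀ j j', IndSub (Bs j) (Bs j') ∨ IndSub (Bs j') (Bs j)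

/-- `G ∈ 𝒥(k,ℓ)`. -/
def InJkl (k ℓ : ℕ) {n : ℕ} (G : SimpleGraph (Fin n)) : Prop :=
  ∃ (s : ℕ) (sz : Fin s → ℕ) (As : ∀ i, SimpleGraph (Fin (sz i))),
    s ≤ k ∧ IsFamSum G sz As ∧ ∀ i, InJA ℓ (As i)


section Chain
variable (R : ℕ → ℕ → Prop) [DecidableRel R]

def chainLenN : ℕ → ℕ
  | i => 1 + ((Finset.range i).filter (fun j => R j i)).attach.sup
      (fun j => chainLenN j.1)
termination_by i => i
decreasing_by
  have := j.2; simp only [Finset.mem_filter, Finset.mem_range] at this; exact this.1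

lemma chainLenN_eq (i : ℕ) : chainLenN R i =
    1 + ((Finset.range i).filter (fun j => R j i)).attach.sup (fun j => chainLenN R j.1) := by
  rw [chainLenN]

lemma chainLenN_pos (i : ℕ) : 1 ≤ chainLenN R i := by
  rw [chainLenN_eq]; omega

lemma chainLenN_lt {j i : ℕ} (hji : j < i) (hR : R j i) :
    chainLenN R j < chainLenN R i := by
  rw [chainLenN_eq R i]
  have hmem : j ∈ (Finset.range i).filter (fun j => R j i) := by
    simp [Finset.mem_filter, Finset.mem_range, hji, hR]
  have h2 : chainLenN R j ≤ ((Finset.range i).filter (fun j => R j i)).attach.sup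
      (fun j => chainLenN R j.1) :=
    by simpa using Finset.le_sup (f := fun j : {x // x ∈ (Finset.range i).filter
      (fun j => R j i)} => chainLenN R j.1) (Finset.mem_attach _ ⟨j, hmem⟩)
  omega

lemma chain_extract (i : ℕ) :
    ∃ g : ℕ → ℕ, g (chainLenN R i - 1) = i ∧
      (∀ r, r + 1 < chainLenN R i → g r < g (r + 1) ∧ R (g r) (g (r + 1))) ∧
      (∀ r, r < chainLenN R i → g r ≤ i) := by
  induction i using Nat.strong_induction_on with
  | _ i IH =>
    set L := chainLenN R i with hL
    rcases Nat.lt_or_ge L 2 with h2 | h2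
    · have h1 : L = 1 := by have := chainLenN_pos R i; omega
      exact ⟨fun _ => i, by simp [h1], by omega, by intro r _; exact le_rfl⟩
    · have hsup : ((Finset.range i).filter (fun j => R j i)).attach.sup
          (fun j => chainLenN R j.1) = L - 1 := by
        rw [hL, chainLenN_eq]; omega
      have hne : ((Finset.range i).filter (fun j => R j i)).attach.Nonempty := by
        by_contra hemp
        rw [Finset.not_nonempty_iff_eq_empty] at hemp
        rw [hemp] at hsup
        simp at hsup; omega
      obtain ⟨j, _, hj⟩ := Finset.exists_mem_eq_sup _ hne (fun j => chainLenN R j.1)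
      rw [hsup] at hj
      have hjmem := j.2
      simp only [Finset.mem_filter, Finset.mem_range] at hjmem
      obtain ⟨hji, hRji⟩ := hjmem
      obtain ⟨g', hg'last, hg'step, hg'le⟩ := IH j.1 hji
      rw [← hj] at hg'last hg'step hg'le
      refine ⟨fun r => if r ≤ L - 2 then g' r else i, ?_, ?_, ?_⟩
      · dsimp only; rw [if_neg (by omega : ¬ (L - 1 ≤ L - 2))]
      · intro r hr
        dsimp only
        rcases Nat.lt_or_ge (r + 1) (L - 1) with h | h
        · have : r ≤ L - 2 := by omega
          have : r + 1 ≤ L - 2 := by omega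
          simp only [if_pos, *]
          rw [if_pos (show r ≤ chainLenN R i - 2 by omega), if_pos (show r + 1 ≤ chainLenN R i - 2 by omega)]
          exact hg'step r (by omega)
        · have hrle : r ≤ L - 2 := by omega
          have hrnle : ¬ (r + 1 ≤ L - 2) := by omega
          rw [if_pos hrle, if_neg hrnle]
          have hreq : r = L - 2 := by omega
          have hlast2 : g' r = j.1 := by
            rw [hreq, ← show (L : ℕ) - 1 - 1 = L - 2 by omega]; exact hg'last
          rw [hlast2]
          exact ⟨hji, hRji⟩
      · intro r hr
        dsimp only
        by_cases h : r ≤ L - 2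
        · rw [if_pos h]; exact le_trans (hg'le r (by omega)) (le_of_lt hji)
        · rw [if_neg h]

end Chain

lemma mono_of_consec {α : Type*} [Preorder α] {L : ℕ} {f : ℕ → α}
    (h : ∀ r, r + 1 < L → f r < f (r + 1)) :
    ∀ {r r'}, r < r' → r' < L → f r < f r' := by
  intro r r' hrr' hr'
  induction r' with
  | zero => omega
  | succ n ih =>
    rcases Nat.lt_or_ge r n with h' | h'
    · exact lt_trans (ih h' (by omega)) (h n (by omega))
    · have : r = n := by omega
      subst this
      exact h r (by omega)

/-- Monotone enumeration of a finset of a linear order. -/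
lemma exists_mono_enum {α : Type*} [LinearOrder α] (T : Finset α) (hT : T.Nonempty) :
    ∃ e : ℕ → α, (∀ r r', r < r' → r' < T.card → e r < e r') ∧
      (∀ r, r < T.card → e r ∈ T) := by
  classical
  refine ⟨fun r => if h : r < T.card then (T.orderIsoOfFin rfl ⟨r, h⟩ : α) else T.min' hT,
    ?_, ?_⟩
  · intro r r' hrr' hr'
    dsimp only
    rw [dif_pos (lt_trans hrr' hr'), dif_pos hr']
    exact_mod_cast (T.orderIsoOfFin rfl).strictMono
      (show (⟨r, lt_trans hrr' hr'⟩ : Fin T.card) < ⟨r', hr'⟩ from hrr')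
  · intro r hr
    dsimp only
    rw [dif_pos hr]
    exact (T.orderIsoOfFin rfl ⟨r, hr⟩).2

/-- Dichotomy: long chain or big "antichain" for an arbitrary relation on `[0,n)`. -/
lemma chain_or_antichain (R : ℕ → ℕ → Prop) (n a b : ℕ) (ha : 1 ≤ a)
    (hn : (a - 1) * b < n) :
    (∃ g : ℕ → ℕ, (∀ r, r < a → g r < n) ∧
      (∀ r, r + 1 < a → g r < g (r + 1) ∧ R (g r) (g (r + 1)))) ∨
    (∃ e : ℕ → ℕ, (∀ r, r ≤ b → e r < n) ∧ (∀ r r', r < r' → r' ≤ b → e r < e r') ∧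
      (∀ r r', r < r' → r' ≤ b → ¬ R (e r) (e r'))) := by
  classical
  by_cases hch : ∃ i < n, a ≤ chainLenN R i
  · obtain ⟨i, hin, hai⟩ := hch
    obtain ⟨g, _, hstep, hle⟩ := chain_extract R i
    left
    refine ⟨g, fun r hr => ?_, fun r hr => hstep r (by omega)⟩
    exact lt_of_le_of_lt (hle r (by omega)) hin
  · push_neg at hch
    -- every chainLenN value is in [1, a-1]; pigeonhole
    have hmaps : ∀ i ∈ Finset.range n, chainLenN R i ∈ Finset.Icc 1 (a - 1) := by
      intro i hi
      rw [Finset.mem_range] at hi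
      rw [Finset.mem_Icc]
      exact ⟨chainLenN_pos R i, by have := hch i hi; omega⟩
    have hcard : (Finset.Icc 1 (a - 1)).card * b < (Finset.range n).card := by
      rw [Nat.card_Icc, Finset.card_range]; simpa using hn
    obtain ⟨y, _, hy⟩ := Finset.exists_lt_card_fiber_of_mul_lt_card_of_maps_to hmaps hcard
    set F := (Finset.range n).filter (fun i => chainLenN R i = y) with hF
    have hFne : F.Nonempty := Finset.card_pos.mp (by omega)
    obtain ⟨e, hmono, hmem⟩ := exists_mono_enum F hFne
    right
    refine ⟨e, fun r hr => ?_, fun r r' h1 h2 => hmono r r' h1 (by omega), ?_⟩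
    · have := hmem r (by omega)
      rw [hF, Finset.mem_filter, Finset.mem_range] at this; exact this.1
    · intro r r' h1 h2 hR
      have h3 := hmem r (by omega)
      have h4 := hmem r' (by omega)
      rw [hF, Finset.mem_filter] at h3 h4
      have := chainLenN_lt R (hmono r r' h1 (by omega)) hR
      omega

/-- Extract either a large fiber or a large subset on which `f` is injective. -/
lemma fiber_or_injOn {α : Type*} [DecidableEq α] (T : Finset ℕ) (f : ℕ → α) (c d : ℕ)
    (h : c * d < T.card) :
    (∃ a : α, c < (T.filter (fun r => f r = a)).card) ∨
    (∃ D : Finset ℕ, D ⊆ T ∧ d < D.card ∧ ∀ r ∈ D, ∀ r' ∈ D, f r = f r' → r = r') := by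
  classical
  by_cases hf : ∃ a : α, c < (T.filter (fun r => f r = a)).card
  · exact Or.inl hf
  · push_neg at hf
    right
    have himg : T.card ≤ c * (T.image f).card :=
      Finset.card_le_mul_card_image T c (fun b _ => hf b)
    have hdcard : d < (T.image f).card := by
      by_contra hcon
      push_neg at hcon
      have : c * (T.image f).card ≤ c * d := Nat.mul_le_mul_left c hcon
      omega
    -- choose a representative in T for each value in the image
    have hrep : ∀ b ∈ T.image f, ∃ r ∈ T, f r = b := by
      intro b hb; rwa [Finset.mem_image] at hb
    choose rep hrepT hrepf using hrep
    refine ⟨(T.image f).attach.image (fun b => rep b.1 b.2), ?_, ?_, ?_⟩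
    · intro r hr
      rw [Finset.mem_image] at hr
      obtain ⟨b, _, rfl⟩ := hr
      exact hrepT _ _
    · rw [Finset.card_image_of_injective _ ?_, Finset.card_attach]
      · exact hdcard
      · intro b b' hbb'
        dsimp only at hbb'
        have : f (rep b.1 b.2) = f (rep b'.1 b'.2) := by rw [hbb']
        rw [hrepf, hrepf] at this
        exact Subtype.ext this
    · intro r hr r' hr' hff
      rw [Finset.mem_image] at hr hr'
      obtain ⟨b, _, rfl⟩ := hr
      obtain ⟨b', _, rfl⟩ := hr'
      rw [hrepf, hrepf] at hff
      rw [Subtype.ext hff]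

section KeyAux

variable {N : ℕ} (G : SimpleGraph (Fin N)) (k ℓ : ℕ)

lemma lHom_refl (x : Fin N) : lHom G ℓ x x := fun _ _ _ => Iff.rfl

lemma lHom_symm {x y : Fin N} (h : lHom G ℓ x y) : lHom G ℓ y x :=
  fun v h1 h2 => (h v h2 h1).symm

lemma buildType3 (hℓ : 1 ≤ ℓ) (p q : ℕ → Fin N)
    (hgap : ∀ r, r < 2 * k → (p r : ℕ) + ℓ ≤ (q r : ℕ))
    (hsep : ∀ r, r + 1 < 2 * k → (q r : ℕ) < (p (r + 1) : ℕ))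
    (hadj : ∀ r, r < 2 * k → (G.Adj (p r) (q r) ↔ Even r)) :
    HasType3 G k ℓ := by
  have hzlt : ∀ (i : Fin (2 * k)) (t : Fin (ℓ - 1)), (p i : ℕ) + (t : ℕ) + 1 < N := by
    intro i t
    have h1 := hgap i i.2
    have h2 := t.2
    have h3 := (q i).2
    omega
  refine ⟨fun i => p i, fun i => q i, fun i t => ⟨(p i : ℕ) + (t : ℕ) + 1, hzlt i t⟩,
    ?_, ?_, ?_, ?_, ?_, ?_⟩
  · intro i t; simp only [Fin.lt_def]; omega
  · intro i t t' htt'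
    simp only [Fin.lt_def] at htt' ⊢
    omega
  · intro i t
    have h1 := hgap i i.2
    have h2 := t.2
    simp only [Fin.lt_def]
    omega
  · intro i
    have h1 := hgap i i.2
    simp only [Fin.lt_def]
    omega
  · intro i j hij
    have h1 := hsep i (by omega)
    have := j.2
    simp only [Fin.lt_def]
    rw [hij]
    exact h1
  · intro i j hij
    have h1 := hadj i i.2
    have h2 := hadj j j.2
    rw [h1, h2, hij, Nat.even_add_one]
    tauto

lemma buildType2 (p q : ℕ → Fin N)
    (hp : ∀ r, r + 1 < 2 * k → (p r : ℕ) < (p (r + 1) : ℕ))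
    (hq : (∀ r, r + 1 < 2 * k → (q r : ℕ) < (q (r + 1) : ℕ)) ∨
      (∀ r, r + 1 < 2 * k → (q (r + 1) : ℕ) < (q r : ℕ)))
    (hpq : ∀ r r', r < 2 * k → r' < 2 * k → (p r : ℕ) < (q r' : ℕ))
    (hadj : ∀ r, r < 2 * k → (G.Adj (p r) (q r) ↔ Even r)) :
    HasType2 G k := by
  refine ⟨fun i => p i, fun i => q i, ?_, ?_, ?_, ?_⟩
  · intro i j hij
    simp only [Fin.lt_def] at hij ⊢
    exact mono_of_consec (f := fun r => (p r : ℕ)) hp hij j.2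
  · rcases hq with hq | hq
    · refine Or.inl (fun i j hij => ?_)
      simp only [Fin.lt_def] at hij ⊢
      exact mono_of_consec (f := fun r => (q r : ℕ)) hq hij j.2
    · refine Or.inr (fun i j hij => ?_)
      simp only [Fin.lt_def] at hij ⊢
      exact mono_of_consec (α := ℕᵒᵈ) (L := 2 * k) (f := fun r => (q r : ℕ)) hq hij j.2
  · intro i j
    simp only [Fin.lt_def]
    exact hpq i j i.2 j.2
  · intro i j hij
    have h1 := hadj i i.2
    have h2 := hadj j j.2
    rw [h1, h2, hij, Nat.even_add_one]
    tauto

lemma buildType1 (y : Fin N) (x : ℕ → Fin N)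
    (hx : ∀ r, r + 1 < 2 * k → (x r : ℕ) < (x (r + 1) : ℕ))
    (hside : (∀ r, r < 2 * k → y < x r) ∨ (∀ r, r < 2 * k → x r < y))
    (hadj : ∀ r, r < 2 * k → (G.Adj y (x r) ↔ Even r)) :
    HasType1 G k := by
  refine ⟨y, fun i => x i, fun i j hij => by
    simp only [Fin.lt_def] at hij ⊢
    exact mono_of_consec (f := fun r => (x r : ℕ)) hx hij j.2, ?_, ?_⟩
  · rcases hside with h | h
    · exact Or.inl (fun i => h i i.2)
    · exact Or.inr (fun i => h i i.2)
  · intro i j hij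
    have h1 := hadj i i.2
    have h2 := hadj j j.2
    rw [h1, h2, hij, Nat.even_add_one]
    tauto

end KeyAux

/-- **Lemma (key lemma).**  If `G` contains no `k`-structure of Type 1 or 2 and no
`(k,ℓ)`-structure of Type 3, then `V(G)` can be partitioned into at most `256k⁴`
blocks of consecutive vertices, each `ℓ`-homogeneous. -/
theorem key_lemma (k ℓ N : ℕ) (hk : 1 ≤ k) (hℓ : 1 ≤ ℓ) (G : SimpleGraph (Fin N))
    (h1 : ¬ HasType1 G k) (h2 : ¬ HasType2 G k) (h3 : ¬ HasType3 G k ℓ) :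
    ∃ (m : ℕ) (c : Fin N → Fin m), m ≤ 256 * k ^ 4 ∧ Monotone c ∧ Function.Surjective c ∧
      ∀ x y : Fin N, c x = c y → lHom G ℓ x y := by
  classical
  -- the "pairwise homogeneous on [a, b)" predicate
  set P : ℕ → ℕ → Prop := fun a b => ∀ x y : Fin N, a ≤ x.val → x.val < b → a ≤ y.val →
    y.val < b → lHom G ℓ x y with hPdef
  set nxt : ℕ → ℕ := fun a => Nat.findGreatest (P a) N with hnxtdef
  have hP_self : ∀ a, a < N → P a (a + 1) := by
    intro a ha x y hx1 hx2 hy1 hy2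
    have : x = y := Fin.ext (by omega)
    rw [this]
    exact lHom_refl G ℓ y
  have hnxt_le : ∀ a, nxt a ≤ N := fun a => Nat.findGreatest_le N
  have hnxt_gt : ∀ a, a < N → a + 1 ≤ nxt a := fun a ha =>
    Nat.le_findGreatest (by omega) (hP_self a ha)
  have hnxt_spec : ∀ a, a < N → P a (nxt a) := fun a ha =>
    Nat.findGreatest_spec (m := a + 1) (by omega) (hP_self a ha)
  have hnxt_max : ∀ a, nxt a < N → ¬ P a (nxt a + 1) := fun a ha =>
    Nat.findGreatest_is_greatest (Nat.lt_succ_self _) (by omega)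
  have hnxt_N : nxt N = N := by
    have h1 : P N N := by intro x y hx1 hx2 hy1 hy2; omega
    have ha := Nat.le_findGreatest (le_rfl) h1
    have hb := Nat.findGreatest_le (P := P N) N
    show Nat.findGreatest (P N) N = N
    omega
  set BS : ℕ → ℕ := fun j => nxt^[j] 0 with hBSdef
  have hBS0 : BS 0 = 0 := rfl
  have hBS_succ : ∀ j, BS (j + 1) = nxt (BS j) := by
    intro j
    simp only [hBSdef, Function.iterate_succ_apply']
  have hBS_le : ∀ j, BS j ≤ N := by
    intro j
    induction j with
    | zero => omega
    | succ n ih => rw [hBS_succ]; exact hnxt_le _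
  have hBS_lt : ∀ j, BS j < N → BS j < BS (j + 1) := by
    intro j hj
    rw [hBS_succ]
    have := hnxt_gt _ hj
    omega
  have hBS_fix : ∀ j, BS j = N → BS (j + 1) = N := by
    intro j hj
    rw [hBS_succ, hj, hnxt_N]
  have hreach : ∃ j, BS j = N := by
    have key : ∀ j, BS j = N ∨ j ≤ BS j := by
      intro j
      induction j with
      | zero => right; omega
      | succ n ih =>
        rcases ih with h | h
        · left; exact hBS_fix n h
        · rcases Nat.lt_or_ge (BS n) N with h' | h'
          · right; exact Nat.succ_le_of_lt (Nat.lt_of_le_of_lt h (hBS_lt n h'))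
          · left
            have h3 : BS n = N := by have := hBS_le n; omega
            exact hBS_fix n h3
    rcases key N with h | h
    · exact ⟨N, h⟩
    · exact ⟨N, by have := hBS_le N; omega⟩
  set m := Nat.find hreach with hmdef
  have hBSm : BS m = N := Nat.find_spec hreach
  have hBS_ltN : ∀ j, j < m → BS j < N := by
    intro j hj
    have h1 := Nat.find_min hreach hj
    have := hBS_le j
    omega
  have hBS_mono : ∀ a b, a < b → a < m → BS a < BS b := by
    intro a b hab ham
    have key : ∀ d, BS a < BS (a + 1 + d) := by
      intro d
      induction d with
      | zero => exact hBS_lt a (hBS_ltN a ham)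
      | succ n ih =>
        rcases Nat.lt_or_ge (BS (a + 1 + n)) N with h | h
        · have := hBS_lt (a + 1 + n) h
          have : BS (a + 1 + n) < BS (a + 1 + n + 1) := this
          calc BS a < BS (a + 1 + n) := ih
            _ ≤ BS (a + 1 + (n + 1)) := by
                rw [show a + 1 + (n + 1) = a + 1 + n + 1 by omega]; omega
        · have h1 := hBS_le (a + 1 + n)
          have h2 : BS (a + 1 + n) = N := by omega
          have := hBS_fix (a + 1 + n) h2
          rw [show a + 1 + (n + 1) = a + 1 + n + 1 by omega, this]
          calc BS a < BS (a + 1 + n) := ih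
            _ ≤ N := hBS_le _
    have := key (b - a - 1)
    rwa [show a + 1 + (b - a - 1) = b by omega] at this
  rcases Nat.eq_zero_or_pos N with rfl | hN0
  · exact ⟨0, fun x => x.elim0, by omega, fun x => x.elim0, fun y => y.elim0,
      fun x => x.elim0⟩
  by_cases hm : m ≤ 256 * k ^ 4
  · -- build the colouring
    set cf : Fin N → ℕ := fun x => Nat.findGreatest (fun j => BS j ≤ x.val) m with hcfdef
    have hcf_le : ∀ x, BS (cf x) ≤ x.val := by
      intro x
      have h0 : BS 0 ≤ x.val := by have := hBS0; omega
      exact Nat.findGreatest_spec (P := fun j => BS j ≤ x.val) (m := 0) (n := m) (Nat.zero_le _) h0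
    have hcf_lt : ∀ x, cf x < m := by
      intro x
      have h1 : cf x ≤ m := Nat.findGreatest_le m
      rcases Nat.lt_or_ge (cf x) m with h | h
      · exact h
      · exfalso
        have heq : cf x = m := by omega
        have hle := hcf_le x
        rw [heq, hBSm] at hle
        have := x.2
        omega
    have hcf_upper : ∀ x, x.val < BS (cf x + 1) := by
      intro x
      by_contra hcon
      push_neg at hcon
      have h1 : cf x + 1 ≤ m := hcf_lt x
      have := Nat.findGreatest_is_greatest (P := fun j => BS j ≤ x.val) (n := m)
        (Nat.lt_succ_self _) h1
      exact this hcon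
    refine ⟨m, fun x => ⟨cf x, hcf_lt x⟩, hm, ?_, ?_, ?_⟩
    · intro x y hxy
      simp only [Fin.mk_le_mk]
      exact Nat.le_findGreatest (Nat.findGreatest_le m)
        (le_trans (hcf_le x) hxy)
    · intro j
      refine ⟨⟨BS j.1, hBS_ltN j.1 j.2⟩, ?_⟩
      have hge : j.1 ≤ cf ⟨BS j.1, hBS_ltN j.1 j.2⟩ :=
        Nat.le_findGreatest (le_of_lt j.2) (le_rfl)
      have hle : cf ⟨BS j.1, hBS_ltN j.1 j.2⟩ ≤ j.1 := by
        by_contra hcon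
        push_neg at hcon
        have h1 := hcf_le ⟨BS j.1, hBS_ltN j.1 j.2⟩
        have h2 : BS j.1 < BS (cf ⟨BS j.1, hBS_ltN j.1 j.2⟩) := hBS_mono _ _ hcon j.2
        simp only at h1
        omega
      exact Fin.ext (show cf ⟨BS j.1, hBS_ltN j.1 j.2⟩ = j.1 by omega)
    · intro x y hxy
      simp only [Fin.mk_eq_mk] at hxy
      set j := cf x with hj
      have hx1 := hcf_le x
      have hx2 := hcf_upper x
      have hy1 := hcf_le y
      have hy2 := hcf_upper y
      rw [← hxy] at hy1 hy2
      have hspec := hnxt_spec (BS j) (hBS_ltN j (hcf_lt x))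
      rw [← hBS_succ] at hspec
      exact hspec x y hx1 hx2 hy1 hy2
  · -- too many blocks: derive a forbidden structure
    exfalso
    push_neg at hm
    have hk4 : 1 ≤ k ^ 4 := Nat.one_le_pow _ _ hk
    have hbound : ∀ r : ℕ, ∃ u v w : Fin N, r < 128 * k ^ 4 →
        BS (2 * r) ≤ u.val ∧ u.val < BS (2 * r + 1) ∧ v.val = BS (2 * r + 1) ∧
        ℓ ≤ ((w.val : ℤ) - (u.val : ℤ)).natAbs ∧ ℓ ≤ ((w.val : ℤ) - (v.val : ℤ)).natAbs ∧
        ¬ (G.Adj u w ↔ G.Adj v w) := by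
      intro r
      by_cases hr : r < 128 * k ^ 4
      swap
      · exact ⟨⟨0, hN0⟩, ⟨0, hN0⟩, ⟨0, hN0⟩, fun h => absurd h hr⟩
      have ha : BS (2 * r) < N := hBS_ltN _ (by omega)
      have hb : BS (2 * r + 1) < N := hBS_ltN _ (by omega)
      have hmax := hnxt_max (BS (2 * r)) (by rw [← hBS_succ]; exact hb)
      rw [← hBS_succ] at hmax
      have hPb := hnxt_spec (BS (2 * r)) ha
      rw [← hBS_succ] at hPb
      simp only [hPdef] at hmax hPb
      push_neg at hmax
      obtain ⟨x, y, hx1, hx2, hy1, hy2, hxy⟩ := hmax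
      have hxyne : x ≠ y := fun h => hxy (h ▸ lHom_refl G ℓ x)
      -- identify which of x, y is the boundary vertex
      have hcase : ∃ u vb : Fin N, BS (2 * r) ≤ u.val ∧ u.val < BS (2 * r + 1) ∧
          vb.val = BS (2 * r + 1) ∧ ¬ lHom G ℓ u vb := by
        by_cases hxb : x.val = BS (2 * r + 1)
        · by_cases hyb : y.val = BS (2 * r + 1)
          · exact absurd (Fin.ext (hyb ▸ hxb)) hxyne
          · exact ⟨y, x, hy1, by omega, hxb, fun h => hxy (lHom_symm G ℓ h)⟩
        · by_cases hyb : y.val = BS (2 * r + 1)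
          · exact ⟨x, y, hx1, by omega, hyb, hxy⟩
          · exact absurd (hPb x y hx1 (by omega) hy1 (by omega)) hxy
      obtain ⟨u, vb, hu1, hu2, hv, hlh⟩ := hcase
      rw [lHom] at hlh
      push_neg at hlh
      obtain ⟨w, hw1, hw2, hw3⟩ := hlh
      exact ⟨u, vb, w, fun _ => ⟨hu1, hu2, hv, by omega, by omega, by tauto⟩⟩
    choose U V W hUVW using hbound
    have hoU : ∀ r, r < 128 * k ^ 4 → BS (2 * r) ≤ (U r).val := fun r hr => ((hUVW r) hr).1
    have hoUb : ∀ r, r < 128 * k ^ 4 → (U r).val < BS (2 * r + 1) := fun r hr => ((hUVW r) hr).2.1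
    have hoV : ∀ r, r < 128 * k ^ 4 → (V r).val = BS (2 * r + 1) := fun r hr => ((hUVW r) hr).2.2.1
    have hd1 : ∀ r, r < 128 * k ^ 4 → ℓ ≤ (((W r).val : ℤ) - ((U r).val : ℤ)).natAbs :=
      fun r hr => ((hUVW r) hr).2.2.2.1
    have hd2 : ∀ r, r < 128 * k ^ 4 → ℓ ≤ (((W r).val : ℤ) - ((V r).val : ℤ)).natAbs :=
      fun r hr => ((hUVW r) hr).2.2.2.2.1
    have hadjne : ∀ r, r < 128 * k ^ 4 → ¬ (G.Adj (U r) (W r) ↔ G.Adj (V r) (W r)) :=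
      fun r hr => ((hUVW r) hr).2.2.2.2.2
    have ho2 : ∀ r, r < 128 * k ^ 4 → (U r).val < (V r).val := by
      intro r hr
      have := hoUb r hr
      have := hoV r hr
      omega
    have hsep : ∀ r r', r < r' → r' < 128 * k ^ 4 → (V r).val < (U r').val := by
      intro r r' h h'
      have h1 := hoV r (by omega)
      have h2 := hoU r' h'
      have h3 : BS (2 * r + 1) < BS (2 * r') := hBS_mono _ _ (by omega) (by omega)
      omega
    -- distinctness of W from U, V
    have hWU : ∀ r, r < 128 * k ^ 4 → (W r).val ≠ (U r).val := by
      intro r hr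
      have := hd1 r hr
      omega
    have hWV : ∀ r, r < 128 * k ^ 4 → (W r).val ≠ (V r).val := by
      intro r hr
      have := hd2 r hr
      omega
    -- endpoint chooser
    set ep : ℕ → ℕ → Fin N := fun b r =>
      if (G.Adj (U r) (W r) ↔ Even b) then U r else V r with hepdef
    have hep_adj : ∀ b r, r < 128 * k ^ 4 → (G.Adj (ep b r) (W r) ↔ Even b) := by
      intro b r hr
      rw [hepdef]
      dsimp only
      split_ifs with h
      · exact h
      · have := hadjne r hr
        tauto
    have hep_lb : ∀ b r, r < 128 * k ^ 4 → (U r).val ≤ (ep b r).val := by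
      intro b r hr
      rw [hepdef]
      dsimp only
      split_ifs
      · exact le_rfl
      · exact le_of_lt (ho2 r hr)
    have hep_ub : ∀ b r, r < 128 * k ^ 4 → (ep b r).val ≤ (V r).val := by
      intro b r hr
      rw [hepdef]
      dsimp only
      split_ifs
      · exact le_of_lt (ho2 r hr)
      · exact le_rfl
    -- classify by the position of the witness
    set cs : ℕ → ℕ := fun r => if (W r).val < (U r).val then 0 else
      if (W r).val < (V r).val then 1 else 2 with hcsdef
    have hmaps : ∀ r ∈ Finset.range (128 * k ^ 4), cs r ∈ Finset.range 3 := by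
      intro r _
      rw [hcsdef]
      dsimp only
      split_ifs <;> simp
    have hcard3 : (Finset.range 3).card * (42 * k ^ 4) < (Finset.range (128 * k ^ 4)).card := by
      rw [Finset.card_range, Finset.card_range]
      omega
    obtain ⟨cv, hcv3, hTcard⟩ :=
      Finset.exists_lt_card_fiber_of_mul_lt_card_of_maps_to hmaps hcard3
    set T := (Finset.range (128 * k ^ 4)).filter (fun r => cs r = cv) with hTdef
    have hTmem : ∀ r ∈ T, r < 128 * k ^ 4 ∧ cs r = cv := by
      intro r hr
      rw [hTdef, Finset.mem_filter, Finset.mem_range] at hr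
      exact hr
    have hTc : 42 * k ^ 4 < T.card := hTcard
    rw [Finset.mem_range] at hcv3
    -- case analysis on the position class
    interval_cases cv
    · -- case A : W r < U r
      have hkk : k ≤ k ^ 4 := Nat.le_self_pow (by norm_num) k
      have hk2 : 1 ≤ k ^ 2 := Nat.one_le_pow _ _ hk
      have hkle2 : k ≤ k ^ 2 := Nat.le_self_pow (by norm_num) k
      have hrowT : ∀ r ∈ T, r < 128 * k ^ 4 ∧ (W r).val < (U r).val := by
        intro r hrT
        obtain ⟨hr, hcs⟩ := hTmem _ hrT
        have hcs' : (W r).val < (U r).val := by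
          rw [hcsdef] at hcs
          dsimp only at hcs
          split_ifs at hcs with ha hb
          all_goals first | exact ha | omega
        exact ⟨hr, hcs'⟩
      rcases fiber_or_injOn T (fun r => W r) (2 * k) (16 * k ^ 3)
          (by have : 2 * k * (16 * k ^ 3) = 32 * k ^ 4 := by ring
              omega) with ⟨a, hfib⟩ | ⟨D, hDT, hDcard, hDinj⟩
      · -- many boundaries share the same witness: Type 1 (witness below)
        set F := T.filter (fun r => W r = a) with hFdef
        have hFne : F.Nonempty := Finset.card_pos.mp (by omega)
        obtain ⟨f, hfmono, hfmem⟩ := exists_mono_enum F hFne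
        have hfrow : ∀ i, i < 2 * k → f i ∈ T ∧ W (f i) = a ∧ f i < 128 * k ^ 4 ∧
            (W (f i)).val < (U (f i)).val := by
          intro i hi
          have hmem := hfmem i (by omega)
          rw [hFdef, Finset.mem_filter] at hmem
          obtain ⟨hT', hW'⟩ := hmem
          obtain ⟨h5, h6⟩ := hrowT _ hT'
          exact ⟨hT', hW', h5, h6⟩
        refine h1 (buildType1 G k a (fun r => ep r (f r)) ?_ ?_ ?_)
        · intro r hr
          obtain ⟨_, _, hs, _⟩ := hfrow r (by omega)
          obtain ⟨_, _, hs', _⟩ := hfrow (r + 1) (by omega)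
          have hub := hep_ub r (f r) hs
          have hlb := hep_lb (r + 1) (f (r + 1)) hs'
          have := hsep (f r) (f (r + 1)) (hfmono r (r + 1) (by omega) (by omega)) hs'
          omega
        · refine Or.inl (fun r hr => ?_)
          obtain ⟨_, hWa, hs, hWU'⟩ := hfrow r hr
          have hlb := hep_lb r (f r) hs
          have : (W (f r)).val = a.val := by rw [hWa]
          simp only [Fin.lt_def]
          omega
        · intro r hr
          obtain ⟨_, hWa, hs, _⟩ := hfrow r hr
          have := hep_adj r (f r) hs
          rw [hWa] at this
          rw [G.adj_comm]
          exact this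
      · -- witnesses pairwise distinct on D
        have hDc2 : (8 * k ^ 2 - 1) * (2 * k - 1) < D.card := by
          have h1 : (8 * k ^ 2 - 1) * (2 * k - 1) ≤ 8 * k ^ 2 * (2 * k) :=
            Nat.mul_le_mul (Nat.sub_le _ _) (Nat.sub_le _ _)
          have h2 : 8 * k ^ 2 * (2 * k) = 16 * k ^ 3 := by ring
          omega
        have hDne : D.Nonempty := Finset.card_pos.mp (by omega)
        obtain ⟨eD, hDmono, hDmem⟩ := exists_mono_enum D hDne
        have hDrow : ∀ i, i < D.card → eD i ∈ D ∧ eD i < 128 * k ^ 4 ∧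
            (W (eD i)).val < (U (eD i)).val := by
          intro i hi
          have h5 := hDmem i hi
          obtain ⟨h6, h7⟩ := hrowT _ (hDT h5)
          exact ⟨h5, h6, h7⟩
        rcases chain_or_antichain (fun i j => (W (eD i)).val < (W (eD j)).val) D.card
            (8 * k ^ 2) (2 * k - 1) (by omega) hDc2 with
          ⟨g, hgbd, hgstep⟩ | ⟨e2, he2bd, he2mono, he2anti⟩
        · -- W strictly increasing along rows ρ = eD ∘ g
          have hgmono : ∀ p q', p < q' → q' < 8 * k ^ 2 → g p < g q' :=
            fun p q' h h' => mono_of_consec (f := g) (fun r hr => (hgstep r hr).1) h h'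
          have hWg : ∀ p q', p < q' → q' < 8 * k ^ 2 →
              (W (eD (g p))).val < (W (eD (g q'))).val := by
            intro p q' h h'
            exact mono_of_consec (f := fun r => (W (eD (g r))).val)
              (fun r hr => (hgstep r hr).2) h h'
          have hρrow : ∀ i, i < 8 * k ^ 2 → g i < D.card ∧ eD (g i) < 128 * k ^ 4 ∧
              (W (eD (g i))).val < (U (eD (g i))).val := by
            intro i hi
            have h5 := hgbd i hi
            obtain ⟨_, h6, h7⟩ := hDrow _ h5
            exact ⟨h5, h6, h7⟩
          have hρmono : ∀ p q', p < q' → q' < 8 * k ^ 2 → eD (g p) < eD (g q') := by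
            intro p q' h h'
            exact hDmono _ _ (hgmono p q' h h') (hgbd q' h')
          rcases chain_or_antichain (fun i j => (V (eD (g i))).val < (W (eD (g j))).val)
              (8 * k ^ 2) (2 * k) (2 * k) (by omega) (by
                have hA : (2 * k - 1) * (2 * k) ≤ 2 * k * (2 * k) :=
                  Nat.mul_le_mul_right _ (Nat.sub_le _ _)
                have hB : 2 * k * (2 * k) = 4 * k ^ 2 := by ring
                omega) with ⟨g2, hg2bd, hg2step⟩ | ⟨e3, he3bd, he3mono, he3anti⟩
          · -- disjoint pairs: Type 3
            refine h3 (buildType3 G k ℓ hℓ (fun r => W (eD (g (g2 r))))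
              (fun r => ep r (eD (g (g2 r)))) ?_ ?_ ?_)
            · intro r hr
              obtain ⟨_, hs, hWU'⟩ := hρrow (g2 r) (hg2bd r hr)
              have hlb := hep_lb r (eD (g (g2 r))) hs
              have hD1 := hd1 _ hs
              omega
            · intro r hr
              have hstep := (hg2step r hr).2
              have hub := hep_ub r (eD (g (g2 r))) (hρrow (g2 r) (hg2bd r (by omega))).2.1
              omega
            · intro r hr
              rw [G.adj_comm]
              exact hep_adj r (eD (g (g2 r))) (hρrow (g2 r) (hg2bd r hr)).2.1
          · -- clustered pairs: Type 2(a) with x = witnesses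
            refine h2 (buildType2 G k (fun r => W (eD (g (e3 (r + 1)))))
              (fun r => ep r (eD (g (e3 (r + 1))))) ?_ (Or.inl ?_) ?_ ?_)
            · intro r hr
              exact hWg (e3 (r + 1)) (e3 (r + 1 + 1))
                (he3mono (r + 1) (r + 1 + 1) (by omega) (by omega))
                (he3bd (r + 1 + 1) (by omega))
            · intro r hr
              have hs := (hρrow (e3 (r + 1)) (he3bd (r + 1) (by omega))).2.1
              have hs' := (hρrow (e3 (r + 1 + 1)) (he3bd (r + 1 + 1) (by omega))).2.1
              have hub := hep_ub r (eD (g (e3 (r + 1)))) hs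
              have hlb := hep_lb (r + 1) (eD (g (e3 (r + 1 + 1)))) hs'
              have := hsep _ _ (hρmono (e3 (r + 1)) (e3 (r + 1 + 1))
                (he3mono (r + 1) (r + 1 + 1) (by omega) (by omega))
                (he3bd (r + 1 + 1) (by omega))) hs'
              omega
            · intro r r' hr hr'
              have hs' := (hρrow (e3 (r' + 1)) (he3bd (r' + 1) (by omega))).2.1
              have hlb := hep_lb r' (eD (g (e3 (r' + 1)))) hs'
              have h6 := he3anti 0 (r + 1) (by omega) (by omega)
              have h5 : (V (eD (g (e3 0)))).val < (U (eD (g (e3 (r' + 1))))).val :=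
                hsep _ _ (hρmono (e3 0) (e3 (r' + 1))
                  (he3mono 0 (r' + 1) (by omega) (by omega))
                  (he3bd (r' + 1) (by omega))) hs'
              omega
            · intro r hr
              rw [G.adj_comm]
              exact hep_adj r (eD (g (e3 (r + 1)))) (hρrow (e3 (r + 1)) (he3bd (r + 1) (by omega))).2.1
        · -- W strictly decreasing along rows δ = eD ∘ e2 : Type 2(b), reversed
          have hδrow : ∀ i, i ≤ 2 * k - 1 → e2 i < D.card ∧ eD (e2 i) ∈ D ∧
              eD (e2 i) < 128 * k ^ 4 ∧ (W (eD (e2 i))).val < (U (eD (e2 i))).val := by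
            intro i hi
            have h5 := he2bd i hi
            obtain ⟨h6, h7, h8⟩ := hDrow _ h5
            exact ⟨h5, h6, h7, h8⟩
          have hWdec : ∀ p q', p < q' → q' ≤ 2 * k - 1 →
              (W (eD (e2 q'))).val < (W (eD (e2 p))).val := by
            intro p q' h h'
            have hne := he2anti p q' h h'
            have h5 : eD (e2 p) ≠ eD (e2 q') := by
              have := hDmono (e2 p) (e2 q') (he2mono p q' h h') (he2bd q' h')
              omega
            have h6 : W (eD (e2 p)) ≠ W (eD (e2 q')) := by
              intro hcon
              exact h5 (hDinj _ (hδrow p (by omega)).2.1 _ (hδrow q' h').2.1 hcon)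
            have : (W (eD (e2 p))).val ≠ (W (eD (e2 q'))).val :=
              fun hcon => h6 (Fin.ext hcon)
            omega
          refine h2 (buildType2 G k (fun r => W (eD (e2 (2 * k - 1 - r))))
            (fun r => ep r (eD (e2 (2 * k - 1 - r)))) ?_ (Or.inr ?_) ?_ ?_)
          · intro r hr
            exact hWdec (2 * k - 1 - (r + 1)) (2 * k - 1 - r) (by omega) (by omega)
          · intro r hr
            have hs := (hδrow (2 * k - 1 - r) (by omega)).2.2.1
            have hs' := (hδrow (2 * k - 1 - (r + 1)) (by omega)).2.2.1
            have hub := hep_ub (r + 1) (eD (e2 (2 * k - 1 - (r + 1)))) hs'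
            have hlb := hep_lb r (eD (e2 (2 * k - 1 - r))) hs
            have := hsep _ _ (hDmono (e2 (2 * k - 1 - (r + 1))) (e2 (2 * k - 1 - r))
              (he2mono (2 * k - 1 - (r + 1)) (2 * k - 1 - r) (by omega) (by omega))
              (he2bd (2 * k - 1 - r) (by omega))) hs
            omega
          · intro r r' hr hr'
            have hs0 := (hδrow 0 (by omega)).2.2.1
            have hs' := (hδrow (2 * k - 1 - r') (by omega)).2.2.1
            have hlb := hep_lb r' (eD (e2 (2 * k - 1 - r'))) hs'
            have hx : (W (eD (e2 (2 * k - 1 - r)))).val ≤ (W (eD (e2 0))).val := by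
              rcases Nat.eq_zero_or_pos (2 * k - 1 - r) with h5 | h5
              · rw [h5]
              · exact le_of_lt (hWdec 0 (2 * k - 1 - r) h5 (by omega))
            have hWU0 := (hδrow 0 (by omega)).2.2.2
            have hy : (U (eD (e2 0))).val ≤ (U (eD (e2 (2 * k - 1 - r')))).val := by
              rcases Nat.eq_zero_or_pos (2 * k - 1 - r') with h5 | h5
              · rw [h5]
              · have h6 := hsep _ _ (hDmono (e2 0) (e2 (2 * k - 1 - r'))
                  (he2mono 0 (2 * k - 1 - r') h5 (by omega))
                  (he2bd (2 * k - 1 - r') (by omega))) hs'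
                have h7 := ho2 _ hs0
                omega
            omega
          · intro r hr
            rw [G.adj_comm]
            exact hep_adj r (eD (e2 (2 * k - 1 - r))) (hδrow (2 * k - 1 - r) (by omega)).2.2.1
    · -- case B : U r < W r < V r
      have hkk : k ≤ k ^ 4 := Nat.le_self_pow (by norm_num) k
      have hTne : T.Nonempty := Finset.card_pos.mp (by omega)
      obtain ⟨e, hemono, hemem⟩ := exists_mono_enum T hTne
      have hrow : ∀ i, i < T.card → e i < 128 * k ^ 4 ∧
          (U (e i)).val < (W (e i)).val ∧ (W (e i)).val < (V (e i)).val := by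
        intro i hi
        obtain ⟨hr, hcs⟩ := hTmem _ (hemem i hi)
        have hcs' : ¬ (W (e i)).val < (U (e i)).val ∧ (W (e i)).val < (V (e i)).val := by
          rw [hcsdef] at hcs
          dsimp only at hcs
          split_ifs at hcs with h1 h2
          all_goals first | exact ⟨h1, h2⟩ | omega
        have := hWU (e i) hr
        exact ⟨hr, by omega, hcs'.2⟩
      refine h3 (buildType3 G k ℓ hℓ
        (fun r => if G.Adj (U (e r)) (W (e r)) ↔ Even r then U (e r) else W (e r))
        (fun r => if G.Adj (U (e r)) (W (e r)) ↔ Even r then W (e r) else V (e r))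
        ?_ ?_ ?_)
      · intro r hr
        have hrc : r < T.card := by omega
        obtain ⟨hs, h1, h2⟩ := hrow r hrc
        have hD1 := hd1 _ hs
        have hD2 := hd2 _ hs
        split_ifs
        · omega
        · omega
      · intro r hr
        have hrc : r < T.card := by omega
        have hrc1 : r + 1 < T.card := by omega
        obtain ⟨hs, h1, h2⟩ := hrow r hrc
        obtain ⟨hs', h1', h2'⟩ := hrow (r + 1) hrc1
        have hsp : (V (e r)).val < (U (e (r + 1))).val :=
          hsep _ _ (hemono r (r + 1) (by omega) hrc1) hs'
        split_ifs <;> omega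
      · intro r hr
        have hrc : r < T.card := by omega
        obtain ⟨hs, h1, h2⟩ := hrow r hrc
        have hne := hadjne _ hs
        split_ifs with h
        · exact h
        · rw [G.adj_comm]
          tauto
    · -- case C : V r < W r
      have hkk : k ≤ k ^ 4 := Nat.le_self_pow (by norm_num) k
      have hk2 : 1 ≤ k ^ 2 := Nat.one_le_pow _ _ hk
      have hkle2 : k ≤ k ^ 2 := Nat.le_self_pow (by norm_num) k
      have hrowT : ∀ r ∈ T, r < 128 * k ^ 4 ∧ (V r).val < (W r).val := by
        intro r hrT
        obtain ⟨hr, hcs⟩ := hTmem _ hrT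
        have hcs' : ¬ (W r).val < (U r).val ∧ ¬ (W r).val < (V r).val := by
          rw [hcsdef] at hcs
          dsimp only at hcs
          split_ifs at hcs with ha hb
          all_goals first | exact ⟨ha, hb⟩ | omega
        have := hWV r hr
        exact ⟨hr, by omega⟩
      rcases fiber_or_injOn T (fun r => W r) (2 * k) (16 * k ^ 3)
          (by have : 2 * k * (16 * k ^ 3) = 32 * k ^ 4 := by ring
              omega) with ⟨a, hfib⟩ | ⟨D, hDT, hDcard, hDinj⟩
      · -- many boundaries share the same witness: Type 1
        set F := T.filter (fun r => W r = a) with hFdef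
        have hFne : F.Nonempty := Finset.card_pos.mp (by omega)
        obtain ⟨f, hfmono, hfmem⟩ := exists_mono_enum F hFne
        have hfrow : ∀ i, i < 2 * k → f i ∈ T ∧ W (f i) = a ∧ f i < 128 * k ^ 4 ∧
            (V (f i)).val < (W (f i)).val := by
          intro i hi
          have hmem := hfmem i (by omega)
          rw [hFdef, Finset.mem_filter] at hmem
          obtain ⟨hT', hW'⟩ := hmem
          obtain ⟨h5, h6⟩ := hrowT _ hT'
          exact ⟨hT', hW', h5, h6⟩
        refine h1 (buildType1 G k a (fun r => ep r (f r)) ?_ ?_ ?_)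
        · intro r hr
          obtain ⟨_, _, hs, _⟩ := hfrow r (by omega)
          obtain ⟨_, _, hs', _⟩ := hfrow (r + 1) (by omega)
          have hub := hep_ub r (f r) hs
          have hlb := hep_lb (r + 1) (f (r + 1)) hs'
          have := hsep (f r) (f (r + 1)) (hfmono r (r + 1) (by omega) (by omega)) hs'
          omega
        · refine Or.inr (fun r hr => ?_)
          obtain ⟨_, hWa, hs, hVW⟩ := hfrow r hr
          have hub := hep_ub r (f r) hs
          have : (W (f r)).val = a.val := by rw [hWa]
          simp only [Fin.lt_def]
          omega
        · intro r hr
          obtain ⟨_, hWa, hs, _⟩ := hfrow r hr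
          have := hep_adj r (f r) hs
          rw [hWa] at this
          rw [G.adj_comm]
          exact this
      · -- witnesses pairwise distinct on D
        have hDc2 : (8 * k ^ 2 - 1) * (2 * k - 1) < D.card := by
          have h1 : (8 * k ^ 2 - 1) * (2 * k - 1) ≤ 8 * k ^ 2 * (2 * k) :=
            Nat.mul_le_mul (Nat.sub_le _ _) (Nat.sub_le _ _)
          have h2 : 8 * k ^ 2 * (2 * k) = 16 * k ^ 3 := by ring
          omega
        have hDne : D.Nonempty := Finset.card_pos.mp (by omega)
        obtain ⟨eD, hDmono, hDmem⟩ := exists_mono_enum D hDne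
        have hDrow : ∀ i, i < D.card → eD i ∈ D ∧ eD i < 128 * k ^ 4 ∧
            (V (eD i)).val < (W (eD i)).val := by
          intro i hi
          have h5 := hDmem i hi
          obtain ⟨h6, h7⟩ := hrowT _ (hDT h5)
          exact ⟨h5, h6, h7⟩
        rcases chain_or_antichain (fun i j => (W (eD i)).val < (W (eD j)).val) D.card
            (8 * k ^ 2) (2 * k - 1) (by omega) (by
              have h1 : (8 * k ^ 2 - 1) * (2 * k - 1) ≤ (8 * k ^ 2 - 1) * (2 * k - 1) := le_rfl
              exact hDc2) with ⟨g, hgbd, hgstep⟩ | ⟨e2, he2bd, he2mono, he2anti⟩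
        · -- W strictly increasing along rows ρ = eD ∘ g
          have hgmono : ∀ p q', p < q' → q' < 8 * k ^ 2 → g p < g q' :=
            fun p q' h h' => mono_of_consec (f := g) (fun r hr => (hgstep r hr).1) h h'
          have hWg : ∀ p q', p < q' → q' < 8 * k ^ 2 →
              (W (eD (g p))).val < (W (eD (g q'))).val := by
            intro p q' h h'
            exact mono_of_consec (f := fun r => (W (eD (g r))).val)
              (fun r hr => (hgstep r hr).2) h h'
          have hρrow : ∀ i, i < 8 * k ^ 2 → g i < D.card ∧ eD (g i) < 128 * k ^ 4 ∧
              (V (eD (g i))).val < (W (eD (g i))).val := by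
            intro i hi
            have h5 := hgbd i hi
            obtain ⟨_, h6, h7⟩ := hDrow _ h5
            exact ⟨h5, h6, h7⟩
          have hρmono : ∀ p q', p < q' → q' < 8 * k ^ 2 → eD (g p) < eD (g q') := by
            intro p q' h h'
            exact hDmono _ _ (hgmono p q' h h') (hgbd q' h')
          rcases chain_or_antichain (fun i j => (W (eD (g i))).val < (U (eD (g j))).val)
              (8 * k ^ 2) (2 * k) (2 * k + 1) (by omega) (by
                have hA : (2 * k - 1) * (2 * k + 1) ≤ 2 * k * (2 * k + 1) :=
                  Nat.mul_le_mul_right _ (Nat.sub_le _ _)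
                have hB : 2 * k * (2 * k + 1) = 4 * k ^ 2 + 2 * k := by ring
                omega) with ⟨g2, hg2bd, hg2step⟩ | ⟨e3, he3bd, he3mono, he3anti⟩
          · -- disjoint pairs: Type 3
            refine h3 (buildType3 G k ℓ hℓ (fun r => ep r (eD (g (g2 r))))
              (fun r => W (eD (g (g2 r)))) ?_ ?_ ?_)
            · intro r hr
              obtain ⟨_, hs, hVW⟩ := hρrow (g2 r) (hg2bd r hr)
              have hub := hep_ub r (eD (g (g2 r))) hs
              have hD2 := hd2 _ hs
              omega
            · intro r hr
              have hstep := (hg2step r hr).2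
              have hlb := hep_lb (r + 1) (eD (g (g2 (r + 1)))) (hρrow (g2 (r + 1)) (hg2bd (r + 1) hr)).2.1
              omega
            · intro r hr
              exact hep_adj r (eD (g (g2 r))) (hρrow (g2 r) (hg2bd r hr)).2.1
          · -- clustered pairs: Type 2(a)
            refine h2 (buildType2 G k (fun r => ep r (eD (g (e3 (r + 1)))))
              (fun r => W (eD (g (e3 (r + 1))))) ?_ (Or.inl ?_) ?_ ?_)
            · intro r hr
              have h5 := he3mono (r + 1) (r + 1 + 1) (by omega) (by omega)
              have hs := (hρrow (e3 (r + 1)) (he3bd (r + 1) (by omega))).2.1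
              have hs' := (hρrow (e3 (r + 1 + 1)) (he3bd (r + 1 + 1) (by omega))).2.1
              have hub := hep_ub r (eD (g (e3 (r + 1)))) hs
              have hlb := hep_lb (r + 1) (eD (g (e3 (r + 1 + 1)))) hs'
              have := hsep _ _ (hρmono (e3 (r + 1)) (e3 (r + 1 + 1)) h5
                (he3bd (r + 1 + 1) (by omega))) hs'
              omega
            · intro r hr
              exact hWg (e3 (r + 1)) (e3 (r + 1 + 1)) (he3mono (r + 1) (r + 1 + 1) (by omega) (by omega))
                (he3bd (r + 1 + 1) (by omega))
            · intro r r' hr hr'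
              have hs := (hρrow (e3 (r + 1)) (he3bd (r + 1) (by omega))).2.1
              have hub := hep_ub r (eD (g (e3 (r + 1)))) hs
              -- V (τ (r+1)) < U (τ (2k+1)) ≤ W (τ 0) < W (τ (r'+1))
              have h5 : (V (eD (g (e3 (r + 1))))).val < (U (eD (g (e3 (2 * k + 1))))).val :=
                hsep _ _ (hρmono (e3 (r + 1)) (e3 (2 * k + 1))
                  (he3mono (r + 1) (2 * k + 1) (by omega) (by omega))
                  (he3bd (2 * k + 1) (by omega)))
                  ((hρrow (e3 (2 * k + 1)) (he3bd (2 * k + 1) (by omega))).2.1)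
              have h6 := he3anti 0 (2 * k + 1) (by omega) (by omega)
              have h7 : (W (eD (g (e3 0)))).val < (W (eD (g (e3 (r' + 1))))).val :=
                hWg (e3 0) (e3 (r' + 1)) (he3mono 0 (r' + 1) (by omega) (by omega))
                  (he3bd (r' + 1) (by omega))
              omega
            · intro r hr
              exact hep_adj r (eD (g (e3 (r + 1)))) (hρrow (e3 (r + 1)) (he3bd (r + 1) (by omega))).2.1
        · -- W strictly decreasing along rows δ = eD ∘ e2 : Type 2(b)
          have hδrow : ∀ i, i ≤ 2 * k - 1 → e2 i < D.card ∧ eD (e2 i) ∈ D ∧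
              eD (e2 i) < 128 * k ^ 4 ∧ (V (eD (e2 i))).val < (W (eD (e2 i))).val := by
            intro i hi
            have h5 := he2bd i hi
            obtain ⟨h6, h7, h8⟩ := hDrow _ h5
            exact ⟨h5, h6, h7, h8⟩
          have hWdec : ∀ p q', p < q' → q' ≤ 2 * k - 1 →
              (W (eD (e2 q'))).val < (W (eD (e2 p))).val := by
            intro p q' h h'
            have hne := he2anti p q' h h'
            have h5 : eD (e2 p) ≠ eD (e2 q') := by
              have := hDmono (e2 p) (e2 q') (he2mono p q' h h') (he2bd q' h')
              omega
            have h6 : W (eD (e2 p)) ≠ W (eD (e2 q')) := by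
              intro hcon
              exact h5 (hDinj _ (hδrow p (by omega)).2.1 _ (hδrow q' h').2.1 hcon)
            have : (W (eD (e2 p))).val ≠ (W (eD (e2 q'))).val :=
              fun hcon => h6 (Fin.ext hcon)
            omega
          refine h2 (buildType2 G k (fun r => ep r (eD (e2 r)))
            (fun r => W (eD (e2 r))) ?_ (Or.inr ?_) ?_ ?_)
          · intro r hr
            have hs := (hδrow r (by omega)).2.2.1
            have hs' := (hδrow (r + 1) (by omega)).2.2.1
            have hub := hep_ub r (eD (e2 r)) hs
            have hlb := hep_lb (r + 1) (eD (e2 (r + 1))) hs'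
            have := hsep _ _ (hDmono (e2 r) (e2 (r + 1))
              (he2mono r (r + 1) (by omega) (by omega)) (he2bd (r + 1) (by omega))) hs'
            omega
          · intro r hr
            exact hWdec r (r + 1) (by omega) (by omega)
          · intro r r' hr hr'
            have hs := (hδrow r (by omega)).2.2.1
            have hub := hep_ub r (eD (e2 r)) hs
            have hB : (V (eD (e2 r))).val ≤ (V (eD (e2 (2 * k - 1)))).val := by
              rcases Nat.lt_or_ge r (2 * k - 1) with h5 | h5
              · have h6 := hsep _ _ (hDmono (e2 r) (e2 (2 * k - 1))
                  (he2mono r (2 * k - 1) h5 le_rfl) (he2bd (2 * k - 1) le_rfl))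
                  (hδrow (2 * k - 1) le_rfl).2.2.1
                have h7 := ho2 _ (hδrow (2 * k - 1) le_rfl).2.2.1
                omega
              · have : r = 2 * k - 1 := by omega
                rw [this]
            have hC := (hδrow (2 * k - 1) le_rfl).2.2.2
            have hD' : (W (eD (e2 (2 * k - 1)))).val ≤ (W (eD (e2 r'))).val := by
              rcases Nat.lt_or_ge r' (2 * k - 1) with h5 | h5
              · exact le_of_lt (hWdec r' (2 * k - 1) h5 le_rfl)
              · have : r' = 2 * k - 1 := by omega
                rw [this]
            omega
          · intro r hr
            exact hep_adj r (eD (e2 r)) (hδrow r (by omega)).2.2.1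
end

section
/- Let ℓ ∈ ℕ and let P be a hereditary property of ordered graphs. Suppose that for arbitrarily large values of k ∈ ℕ, some graph in P contains a (k,ℓ)-structure of Type 3. Then |P_n| ≥ F_{n,ℓ+1} for every n ∈ ℕ. -/
open Finset

namespace T3X

/-! ### part-indexing of lists -/

def pIdx : List ℕ → ℕ → ℕ
  | [], _ => 0
  | a :: l, s => if s < a then 0 else pIdx l (s - a) + 1

def pOfs : List ℕ → ℕ → ℕ
  | [], s => s
  | a :: l, s => if s < a then s else pOfs l (s - a)

def pSz : List ℕ → ℕ → ℕ
  | [], _ => 0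
  | a :: l, s => if s < a then a else pSz l (s - a)

lemma pIdx_lt_length : ∀ (l : List ℕ) (s : ℕ), s < l.sum → pIdx l s < l.length := by
  intro l
  induction l with
  | nil => intro s hs; simp at hs
  | cons a t ih =>
    intro s hs
    simp only [pIdx, List.length_cons]
    split
    · omega
    · have := ih (s - a) (by simp [List.sum_cons] at hs; omega)
      omega

lemma length_le_sum : ∀ (l : List ℕ), (∀ x ∈ l, 0 < x) → l.length ≤ l.sum := by
  intro l
  induction l with
  | nil => simp
  | cons a t ih =>
    intro hp
    have h1 := hp a (by simp)
    have h2 := ih (fun x hx => hp x (by simp [hx]))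
    simp only [List.length_cons, List.sum_cons]
    omega

lemma pOfs_lt_pSz : ∀ (l : List ℕ) (s : ℕ), s < l.sum → pOfs l s < pSz l s := by
  intro l
  induction l with
  | nil => intro s hs; simp at hs
  | cons a t ih =>
    intro s hs
    simp only [pOfs, pSz]
    split
    · assumption
    · exact ih _ (by simp [List.sum_cons] at hs; omega)

lemma pSz_mem : ∀ (l : List ℕ) (s : ℕ), s < l.sum → pSz l s ∈ l := by
  intro l
  induction l with
  | nil => intro s hs; simp at hs
  | cons a t ih =>
    intro s hs
    simp only [pSz]
    split
    · simp
    · exact List.mem_cons_of_mem _ (ih _ (by simp [List.sum_cons] at hs; omega))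

lemma pIdx_mono : ∀ (l : List ℕ) (s s' : ℕ), s ≤ s' → pIdx l s ≤ pIdx l s' := by
  intro l
  induction l with
  | nil => intro s s' _; simp [pIdx]
  | cons a t ih =>
    intro s s' hss
    simp only [pIdx]
    split
    · omega
    · rename_i hs
      rw [if_neg (by omega)]
      have := ih (s - a) (s' - a) (by omega)
      omega

lemma same_part : ∀ (l : List ℕ) (s s' : ℕ), s ≤ s' →
    pIdx l s = pIdx l s' → pOfs l s' = pOfs l s + (s' - s) ∧ pSz l s' = pSz l s := by
  intro l
  induction l with
  | nil => intro s s' h _; simp [pOfs, pSz]; omega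
  | cons a t ih =>
    intro s s' hss hidx
    simp only [pIdx] at hidx
    simp only [pOfs, pSz]
    by_cases h1 : s < a
    · by_cases h2 : s' < a
      · rw [if_pos h1, if_pos h2, if_pos h1, if_pos h2]; omega
      · rw [if_pos h1, if_neg h2] at hidx; omega
    · have h2 : ¬ s' < a := by omega
      rw [if_neg h1, if_neg h2, if_neg h1, if_neg h2]
      rw [if_neg h1, if_neg h2] at hidx
      have := ih (s - a) (s' - a) (by omega) (by omega)
      constructor
      · omega
      · exact this.2

lemma forward : ∀ (l : List ℕ) (s r : ℕ), s < l.sum → pOfs l s = 0 → r < pSz l s →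
    s + r < l.sum ∧ pIdx l (s + r) = pIdx l s ∧ pOfs l (s + r) = r ∧ pSz l (s + r) = pSz l s := by
  intro l
  induction l with
  | nil => intro s r hs; simp at hs
  | cons a t ih =>
    intro s r hs h0 hr
    simp only [List.sum_cons] at hs ⊢
    simp only [pOfs, pSz, pIdx] at *
    by_cases h1 : s < a
    · rw [if_pos h1] at h0 hr
      subst h0
      simp only [Nat.zero_add]
      simp only [if_pos hr, if_pos h1]
      exact ⟨by omega, trivial, trivial, trivial⟩
    · rw [if_neg h1] at h0 hr ⊢
      have h2 : ¬ s + r < a := by omega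
      have := ih (s - a) r (by omega) h0 hr
      have harith : s + r - a = s - a + r := by omega
      rw [if_neg h2, if_neg h1, if_neg h2, if_neg h2, harith]
      exact ⟨by omega, by rw [this.2.1], this.2.2.1, this.2.2.2⟩

/-- the decoding lemma: a composition is determined by any relation `Q` that
holds on part endpoints and implies being in the same part. -/
lemma decode : ∀ (l : List ℕ) (Q : ℕ → ℕ → Prop) (l' : List ℕ),
    (∀ x ∈ l, 0 < x) → (∀ x ∈ l', 0 < x) → l.sum = l'.sum →
    (∀ s s', s < s' → s' < l.sum → Q s s' → pIdx l s = pIdx l s') →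
    (∀ s s', s < s' → s' < l'.sum → Q s s' → pIdx l' s = pIdx l' s') →
    (∀ s, s < l.sum → pOfs l s = 0 → 2 ≤ pSz l s → Q s (s + pSz l s - 1)) →
    (∀ s, s < l'.sum → pOfs l' s = 0 → 2 ≤ pSz l' s → Q s (s + pSz l' s - 1)) →
    l = l' := by
  have head_le : ∀ (Q : ℕ → ℕ → Prop) (a a' : ℕ) (t t' : List ℕ), 0 < a → 0 < a' →
      (a :: t).sum = (a' :: t').sum →
      (∀ s s', s < s' → s' < (a :: t).sum → Q s s' → pIdx (a :: t) s = pIdx (a :: t) s') →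
      (∀ s, s < (a' :: t').sum → pOfs (a' :: t') s = 0 → 2 ≤ pSz (a' :: t') s →
        Q s (s + pSz (a' :: t') s - 1)) →
      a' ≤ a := by
    intro Q a a' t t' ha ha' hsum hF1 hF2'
    by_cases h2 : 2 ≤ a'
    · have c1 : pOfs (a' :: t') 0 = 0 := by simp only [pOfs]; rw [if_pos ha']
      have c2 : pSz (a' :: t') 0 = a' := by simp only [pSz]; rw [if_pos ha']
      have hq := hF2' 0 (by simp only [List.sum_cons]; omega) c1 (by rw [c2]; exact h2)
      rw [c2] at hq
      have := hF1 0 (0 + a' - 1) (by omega)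
        (by simp only [List.sum_cons] at hsum ⊢; omega) hq
      simp only [pIdx] at this
      rw [if_pos ha] at this
      by_contra hcon
      rw [if_neg (by omega)] at this
      omega
    · omega
  intro l
  induction l with
  | nil =>
    intro Q l' _ hpos' hsum _ _ _ _
    cases l' with
    | nil => rfl
    | cons a t => exfalso; have := hpos' a (by simp); simp at hsum; omega
  | cons a t ih =>
    intro Q l' hpos hpos' hsum hF1 hF1' hF2 hF2'
    cases l' with
    | nil => exfalso; have := hpos a (by simp); simp at hsum; omega
    | cons a' t' =>
      have ha : 0 < a := hpos a (by simp)
      have ha' : 0 < a' := hpos' a' (by simp)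
      have hle1 : a' ≤ a := head_le Q a a' t t' ha ha' hsum hF1 hF2'
      have hle2 : a ≤ a' := head_le Q a' a t' t ha' ha hsum.symm hF1' hF2
      have haa : a = a' := le_antisymm hle2 hle1
      subst haa
      have htail : t = t' := by
        apply ih (fun u v => Q (u + a) (v + a)) t'
          (fun x hx => hpos x (by simp [hx])) (fun x hx => hpos' x (by simp [hx]))
          (by simp only [List.sum_cons] at hsum; omega)
        · intro s s' hss hs' hq
          have := hF1 (s + a) (s' + a) (by omega) (by simp only [List.sum_cons]; omega) hq
          simp only [pIdx] at this
          rw [if_neg (by omega), if_neg (by omega), Nat.add_sub_cancel, Nat.add_sub_cancel] at this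
          omega
        · intro s s' hss hs' hq
          have := hF1' (s + a) (s' + a) (by omega) (by simp only [List.sum_cons]; omega) hq
          simp only [pIdx] at this
          rw [if_neg (by omega), if_neg (by omega), Nat.add_sub_cancel, Nat.add_sub_cancel] at this
          omega
        · intro s hs h0 h2
          have c1 : pOfs (a :: t) (s + a) = pOfs t s := by
            simp only [pOfs]; rw [if_neg (by omega), Nat.add_sub_cancel]
          have c2 : pSz (a :: t) (s + a) = pSz t s := by
            simp only [pSz]; rw [if_neg (by omega), Nat.add_sub_cancel]
          have hgoal := hF2 (s + a) (by simp only [List.sum_cons]; omega)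
            (by rw [c1]; exact h0) (by rw [c2]; exact h2)
          rw [c2] at hgoal
          have e : s + a + pSz t s - 1 = s + pSz t s - 1 + a := by omega
          rw [e] at hgoal
          exact hgoal
        · intro s hs h0 h2
          have c1 : pOfs (a :: t') (s + a) = pOfs t' s := by
            simp only [pOfs]; rw [if_neg (by omega), Nat.add_sub_cancel]
          have c2 : pSz (a :: t') (s + a) = pSz t' s := by
            simp only [pSz]; rw [if_neg (by omega), Nat.add_sub_cancel]
          have hgoal := hF2' (s + a) (by simp only [List.sum_cons]; omega)
            (by rw [c1]; exact h0) (by rw [c2]; exact h2)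
          rw [c2] at hgoal
          have e : s + a + pSz t' s - 1 = s + pSz t' s - 1 + a := by omega
          rw [e] at hgoal
          exact hgoal
      rw [htail]

/-! ### compositions -/

def comps (k : ℕ) : ℕ → Finset (List ℕ)
  | 0 => {[]}
  | n + 1 => (Finset.range k).biUnion fun i =>
      if i ≤ n then (comps k (n - i)).image (fun l => (i + 1) :: l) else ∅
decreasing_by omega

lemma comps_card (k : ℕ) : ∀ n, (comps k n).card = genFib k n := by
  intro n
  induction n using Nat.strong_induction_on with
  | _ n ih =>
    match n with
    | 0 => simp [comps, genFib]
    | n + 1 =>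
      rw [comps, genFib]
      rw [Finset.card_biUnion]
      · refine Finset.sum_congr rfl fun i _ => ?_
        by_cases h : i ≤ n
        · rw [if_pos h, if_pos h,
            Finset.card_image_of_injective _ (fun a b hab => by injection hab),
            ih (n - i) (by omega)]
        · rw [if_neg h, if_neg h, Finset.card_empty]
      · intro i _ j _ hij
        simp only [Function.onFun]
        rw [Finset.disjoint_left]
        intro u hu1 hu2
        by_cases hi : i ≤ n
        · by_cases hj : j ≤ n
          · rw [if_pos hi, Finset.mem_image] at hu1
            rw [if_pos hj, Finset.mem_image] at hu2
            obtain ⟨l1, _, e1⟩ := hu1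
            obtain ⟨l2, _, e2⟩ := hu2
            rw [← e1] at e2
            apply hij
            injection e2 with e3 _
            omega
          · rw [if_neg hj] at hu2; simp at hu2
        · rw [if_neg hi] at hu1; simp at hu1

lemma comps_mem (k : ℕ) : ∀ n l, l ∈ comps k n → l.sum = n ∧ ∀ a ∈ l, 0 < a ∧ a ≤ k := by
  intro n
  induction n using Nat.strong_induction_on with
  | _ n ih =>
    match n with
    | 0 =>
      intro l hl
      simp only [comps, Finset.mem_singleton] at hl
      subst hl
      simp
    | n + 1 =>
      intro l hl
      rw [comps] at hl
      simp only [Finset.mem_biUnion, Finset.mem_range] at hl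
      obtain ⟨i, hik, hl⟩ := hl
      by_cases hi : i ≤ n
      · rw [if_pos hi, Finset.mem_image] at hl
        obtain ⟨l0, hl0, rfl⟩ := hl
        obtain ⟨hsum, hmem⟩ := ih (n - i) (by omega) l0 hl0
        constructor
        · simp only [List.sum_cons]; omega
        · intro a ha
          rcases List.mem_cons.mp ha with rfl | ha
          · omega
          · exact hmem a ha
      · rw [if_neg hi] at hl; simp at hl

/-! ### genFib bounds -/

lemma genFib_zero (k : ℕ) : genFib k 0 = 1 := by rw [genFib]

lemma genFib_one_le (k : ℕ) : genFib k 1 ≤ 1 := by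
  rw [genFib]
  have : ∀ i ∈ Finset.range k, (if i ≤ 0 then genFib k (0 - i) else 0)
      = if i = 0 then 1 else 0 := by
    intro i _
    by_cases h : i = 0
    · subst h; simp [genFib_zero]
    · rw [if_neg (by omega), if_neg h]
  rw [Finset.sum_congr rfl this, Finset.sum_ite_eq' (Finset.range k) 0 (fun _ => 1)]
  split <;> omega

lemma genFib_double (k n : ℕ) : genFib k (n + 2) ≤ 2 * genFib k (n + 1) := by
  match k with
  | 0 => rw [genFib]; simp
  | k + 1 =>
    conv_lhs => rw [genFib]
    rw [Finset.sum_range_succ']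
    have h1 : (if (0:ℕ) ≤ n + 1 then genFib (k+1) (n + 1 - 0) else 0) = genFib (k+1) (n+1) := by
      rw [if_pos (by omega), Nat.sub_zero]
    rw [h1]
    have h2 : ∑ i ∈ Finset.range k, (if i + 1 ≤ n + 1 then genFib (k+1) (n + 1 - (i+1)) else 0)
        ≤ genFib (k+1) (n+1) := by
      conv_rhs => rw [genFib]
      refine le_trans (le_of_eq (Finset.sum_congr rfl fun i _ => ?_))
        (Finset.sum_le_sum_of_subset (Finset.range_subset_range.mpr (by omega)))
      by_cases h : i ≤ n
      · rw [if_pos (by omega), if_pos h]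
        congr 1
        omega
      · rw [if_neg (by omega), if_neg h]
    omega

lemma genFib_le_pow (k : ℕ) : ∀ n, genFib k (n + 1) ≤ 2 ^ n := by
  intro n
  induction n with
  | zero => simpa using genFib_one_le k
  | succ n ih =>
    calc genFib k (n + 2) ≤ 2 * genFib k (n + 1) := genFib_double k n
    _ ≤ 2 * 2 ^ n := by omega
    _ = 2 ^ (n + 1) := by ring

/-! ### finite multicolour Ramsey for pairs -/

lemma preh {C : Type} [Fintype C] [Nonempty C] (m : ℕ) :
    ∃ R : ℕ, ∀ (f : ℕ → ℕ → C) (S : Finset ℕ), R ≤ S.card →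
      ∃ (g : Fin m → ℕ) (col : Fin m → C), StrictMono g ∧ (∀ i, g i ∈ S) ∧
        ∀ i j : Fin m, i < j → f (g i) (g j) = col i := by
  classical
  induction m with
  | zero =>
    exact ⟨0, fun f S _ => ⟨Fin.elim0, Fin.elim0, fun i => i.elim0,
      fun i => i.elim0, fun i => i.elim0⟩⟩
  | succ m ih =>
    obtain ⟨R, hR⟩ := ih
    refine ⟨Fintype.card C * R + 1, fun f S hS => ?_⟩
    have hne : S.Nonempty := Finset.card_pos.mp (by omega)
    set v0 := S.min' hne with hv0
    have hS' : (Finset.univ : Finset C).card * R ≤ (S.erase v0).card := by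
      rw [Finset.card_erase_of_mem (S.min'_mem hne), Finset.card_univ]
      omega
    obtain ⟨c0, _, hc0⟩ := Finset.exists_le_card_fiber_of_mul_le_card_of_maps_to
      (f := fun u => f v0 u) (fun x _ => Finset.mem_univ _) Finset.univ_nonempty hS'
    obtain ⟨g, col, hmono, hmem, hcol⟩ :=
      hR f ((S.erase v0).filter (fun u => f v0 u = c0)) hc0
    refine ⟨Fin.cases v0 g, Fin.cases c0 col, ?_, ?_, ?_⟩
    · intro i j hij
      induction j using Fin.cases with
      | zero => exact absurd hij (Fin.not_lt_zero _)
      | succ j =>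
        induction i using Fin.cases with
        | zero =>
          simp only [Fin.cases_zero, Fin.cases_succ]
          have hmem2 := hmem j
          rw [Finset.mem_filter, Finset.mem_erase] at hmem2
          exact lt_of_le_of_ne (S.min'_le _ hmem2.1.2) (Ne.symm hmem2.1.1)
        | succ i =>
          simp only [Fin.cases_succ]
          exact hmono (by rwa [Fin.succ_lt_succ_iff] at hij)
    · intro i
      induction i using Fin.cases with
      | zero => exact S.min'_mem hne
      | succ i =>
        have hmem2 := hmem i
        rw [Finset.mem_filter, Finset.mem_erase] at hmem2
        exact hmem2.1.2
    · intro i j hij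
      induction j using Fin.cases with
      | zero => exact absurd hij (Fin.not_lt_zero _)
      | succ j =>
        induction i using Fin.cases with
        | zero =>
          simp only [Fin.cases_zero, Fin.cases_succ]
          have hmem2 := hmem j
          rw [Finset.mem_filter] at hmem2
          exact hmem2.2
        | succ i =>
          simp only [Fin.cases_succ]
          exact hcol i j (by rwa [Fin.succ_lt_succ_iff] at hij)

lemma ramsey_pairs {C : Type} [Fintype C] [Nonempty C] (n : ℕ) :
    ∃ R : ℕ, ∀ (f : ℕ → ℕ → C) (S : Finset ℕ), R ≤ S.card →
      ∃ (g : Fin n → ℕ) (c : C), StrictMono g ∧ (∀ i, g i ∈ S) ∧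
        ∀ i j : Fin n, i < j → f (g i) (g j) = c := by
  classical
  obtain ⟨R, hR⟩ := preh (C := C) (Fintype.card C * n)
  refine ⟨R, fun f S hS => ?_⟩
  obtain ⟨g, col, hmono, hmem, hcol⟩ := hR f S hS
  have hpig : (Finset.univ : Finset C).card * n ≤ (Finset.univ : Finset (Fin (Fintype.card C * n))).card := by
    simp [Finset.card_univ]
  obtain ⟨c, _, hc⟩ := Finset.exists_le_card_fiber_of_mul_le_card_of_maps_to
    (f := col) (fun x _ => Finset.mem_univ _) Finset.univ_nonempty hpig
  obtain ⟨T, hTsub, hTcard⟩ := Finset.exists_subset_card_eq hc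
  refine ⟨fun i => g (T.orderEmbOfFin hTcard i), c, ?_, ?_, ?_⟩
  · exact hmono.comp (T.orderEmbOfFin hTcard).strictMono
  · intro i; exact hmem _
  · intro i j hij
    have h1 := hcol (T.orderEmbOfFin hTcard i) (T.orderEmbOfFin hTcard j)
      ((T.orderEmbOfFin hTcard).strictMono hij)
    have h2 := hTsub (T.orderEmbOfFin_mem hTcard i)
    rw [Finset.mem_filter] at h2
    rw [h1, h2.2]

/-! ### graph-side helpers -/

lemma card_le_speed (P : HerProp) (n : ℕ) (T : Finset (SimpleGraph (Fin n)))
    (hT : ∀ H ∈ T, H ∈ P.mem n) : T.card ≤ speed P n := by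
  classical
  calc T.card = (↑T : Set (SimpleGraph (Fin n))).ncard := (Set.ncard_coe_finset T).symm
  _ ≤ (P.mem n).ncard := Set.ncard_le_ncard (fun H hH => hT H (by simpa using hH))
      (Set.toFinite _)

lemma mem_of_comap (P : HerProp) {N n : ℕ} {G : SimpleGraph (Fin N)} (hG : G ∈ P.mem N)
    (v : Fin n → Fin N) (hv : StrictMono v) : G.comap v ∈ P.mem n := by
  refine P.hered _ _ ⟨OrderEmbedding.ofStrictMono v hv, fun i j => ?_⟩ hG
  simp [SimpleGraph.comap]

/-! ### blocks of a type-3 structure -/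

def BBd (k m : ℕ) (hk : 1 ≤ k) : Fin (2*k) := ⟨min m (2*k-1), by omega⟩

def VTd {N : ℕ} (ℓ k : ℕ) (hk : 1 ≤ k) (x y : Fin (2*k) → Fin N)
    (z : Fin (2*k) → Fin (ℓ-1) → Fin N) (m p : ℕ) : Fin N :=
  if h0 : p = 0 then x (BBd k m hk)
  else if h1 : ℓ ≤ p then y (BBd k m hk)
  else z (BBd k m hk) ⟨p - 1, by omega⟩

def Wd {N : ℕ} (ℓ k : ℕ) (hk : 1 ≤ k) (x y : Fin (2*k) → Fin N)
    (z : Fin (2*k) → Fin (ℓ-1) → Fin N) (o : Bool) (i : ℕ) (χ : Bool × Fin (ℓ+1)) : Fin N :=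
  VTd ℓ k hk x y z (2*i + (if χ.1 = o then 0 else 1)) (χ.2 : ℕ)

section Blocks

variable {N ℓ k : ℕ} {G : SimpleGraph (Fin N)}
variable {x y : Fin (2*k) → Fin N} {z : Fin (2*k) → Fin (ℓ-1) → Fin N}
variable (hk : 1 ≤ k) (hℓ : 1 ≤ ℓ)

lemma BBd_coe (m : ℕ) (hm : m < 2*k) : ((BBd k m hk : Fin (2*k)) : ℕ) = m := by
  simp only [BBd]
  omega

lemma yx_lt (h4 : ∀ i, x i < y i)
    (h5 : ∀ i j : Fin (2*k), (j : ℕ) = (i : ℕ) + 1 → y i < x j) :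
    ∀ m m', m < m' → m' < 2*k → y (BBd k m hk) < x (BBd k m' hk) := by
  intro m m' hmm'
  induction m' with
  | zero => omega
  | succ m' ih =>
    intro hb
    rcases Nat.lt_or_ge m m' with hc | hc
    · have hy := ih hc (by omega)
      have hxy := h4 (BBd k m' hk)
      have hstep := h5 (BBd k m' hk) (BBd k (m'+1) hk)
        (by rw [BBd_coe hk m' (by omega), BBd_coe hk (m'+1) hb])
      exact lt_trans hy (lt_trans hxy hstep)
    · have hm : m = m' := by omega
      subst hm
      exact h5 _ _ (by rw [BBd_coe hk m (by omega), BBd_coe hk (m+1) hb])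

lemma VTd_le_y (h1 : ∀ i t, x i < z i t) (h3 : ∀ i t, z i t < y i) (h4 : ∀ i, x i < y i)
    (m p : ℕ) : VTd ℓ k hk x y z m p ≤ y (BBd k m hk) := by
  unfold VTd
  split
  · exact (h4 _).le
  · split
    · exact le_rfl
    · exact (h3 _ _).le

lemma x_le_VTd (h1 : ∀ i t, x i < z i t) (h4 : ∀ i, x i < y i)
    (m p : ℕ) : x (BBd k m hk) ≤ VTd ℓ k hk x y z m p := by
  unfold VTd
  split
  · exact le_rfl
  · split
    · exact (h4 _).le
    · exact (h1 _ _).le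

lemma VTd_lt_same (h1 : ∀ i t, x i < z i t) (h2 : ∀ i, StrictMono (z i))
    (h3 : ∀ i t, z i t < y i) (h4 : ∀ i, x i < y i)
    (m p p' : ℕ) (hp : p < p') (hp' : p' ≤ ℓ) :
    VTd ℓ k hk x y z m p < VTd ℓ k hk x y z m p' := by
  unfold VTd
  by_cases hp0 : p = 0
  · rw [dif_pos hp0, dif_neg (show ¬ p' = 0 by omega)]
    by_cases hpl' : ℓ ≤ p'
    · rw [dif_pos hpl']; exact h4 _
    · rw [dif_neg hpl']; exact h1 _ _
  · have hpl : ¬ ℓ ≤ p := by omega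
    rw [dif_neg hp0, dif_neg hpl, dif_neg (show ¬ p' = 0 by omega)]
    by_cases hpl' : ℓ ≤ p'
    · rw [dif_pos hpl']; exact h3 _ _
    · rw [dif_neg hpl']
      exact h2 _ (show (⟨p - 1, by omega⟩ : Fin (ℓ-1)) < ⟨p' - 1, by omega⟩ by
        rw [Fin.mk_lt_mk]; omega)

lemma VTd_lt_cross (h1 : ∀ i t, x i < z i t) (h3 : ∀ i t, z i t < y i) (h4 : ∀ i, x i < y i)
    (h5 : ∀ i j : Fin (2*k), (j : ℕ) = (i : ℕ) + 1 → y i < x j)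
    (m m' p p' : ℕ) (hmm' : m < m') (hm' : m' < 2*k) :
    VTd ℓ k hk x y z m p < VTd ℓ k hk x y z m' p' :=
  lt_of_le_of_lt (VTd_le_y hk h1 h3 h4 m p)
    (lt_of_lt_of_le (yx_lt hk h4 h5 m m' hmm' hm') (x_le_VTd hk h1 h4 m' p'))

lemma TT_alt (h6 : ∀ i j : Fin (2*k), (j : ℕ) = (i : ℕ) + 1 →
      (G.Adj (x i) (y i) ↔ ¬ G.Adj (x j) (y j)))
    (m : ℕ) (hm : m + 1 < 2*k) :
    G.Adj (x (BBd k (m+1) hk)) (y (BBd k (m+1) hk)) ↔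
      ¬ G.Adj (x (BBd k m hk)) (y (BBd k m hk)) := by
  have := h6 (BBd k m hk) (BBd k (m+1) hk)
    (by rw [BBd_coe hk m (by omega), BBd_coe hk (m+1) hm])
  tauto

lemma TT_even (h6 : ∀ i j : Fin (2*k), (j : ℕ) = (i : ℕ) + 1 →
      (G.Adj (x i) (y i) ↔ ¬ G.Adj (x j) (y j))) :
    ∀ i, 2*i+1 < 2*k →
    ((G.Adj (x (BBd k (2*i) hk)) (y (BBd k (2*i) hk)) ↔
        G.Adj (x (BBd k 0 hk)) (y (BBd k 0 hk))) ∧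
     (G.Adj (x (BBd k (2*i+1) hk)) (y (BBd k (2*i+1) hk)) ↔
        ¬ G.Adj (x (BBd k 0 hk)) (y (BBd k 0 hk)))) := by
  intro i
  induction i with
  | zero =>
    intro hb
    have e0 : 2*0 = 0 := by omega
    rw [e0]
    exact ⟨Iff.rfl, by have := TT_alt hk h6 0 (by omega); simpa using this⟩
  | succ i ih =>
    intro hb
    have hh := ih (by omega)
    have a1 := TT_alt hk h6 (2*i+1) (by omega)
    have e1 : 2*(i+1) = 2*i+1+1 := by omega
    have a2 := TT_alt hk h6 (2*i+1+1) (by omega)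
    rw [e1]
    constructor
    · rw [a1]; tauto
    · rw [a2, a1]; tauto

lemma Wd_lt_same (h1 : ∀ i t, x i < z i t) (h2 : ∀ i, StrictMono (z i))
    (h3 : ∀ i t, z i t < y i) (h4 : ∀ i, x i < y i)
    (o hb : Bool) (i : ℕ) (p p' : Fin (ℓ+1)) (hp : p < p') :
    Wd ℓ k hk x y z o i (hb, p) < Wd ℓ k hk x y z o i (hb, p') := by
  exact VTd_lt_same hk h1 h2 h3 h4 _ p p' hp (by omega)

lemma Wd_lt_cross (h1 : ∀ i t, x i < z i t) (h3 : ∀ i t, z i t < y i) (h4 : ∀ i, x i < y i)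
    (h5 : ∀ i j : Fin (2*k), (j : ℕ) = (i : ℕ) + 1 → y i < x j)
    (o : Bool) (i j : ℕ) (hij : i < j) (hj : j < k) (χ χ' : Bool × Fin (ℓ+1)) :
    Wd ℓ k hk x y z o i χ < Wd ℓ k hk x y z o j χ' := by
  unfold Wd
  refine VTd_lt_cross hk h1 h3 h4 h5 _ _ _ _ ?_ ?_
  · have b1 : (if χ.1 = o then 0 else 1) ≤ 1 := by split <;> omega
    omega
  · have b2 : (if χ'.1 = o then 0 else 1) ≤ 1 := by split <;> omega
    omega

lemma Wd_edge (hℓ : 1 ≤ ℓ) (h6 : ∀ i j : Fin (2*k), (j : ℕ) = (i : ℕ) + 1 →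
      (G.Adj (x i) (y i) ↔ ¬ G.Adj (x j) (y j)))
    (o : Bool) (ho : (o = true) ↔ G.Adj (x (BBd k 0 hk)) (y (BBd k 0 hk)))
    (i : ℕ) (hi : i < k) (hb : Bool) :
    G.Adj (Wd ℓ k hk x y z o i (hb, ⟨0, by omega⟩)) (Wd ℓ k hk x y z o i (hb, ⟨ℓ, by omega⟩))
      ↔ hb = true := by
  have heven := TT_even hk h6 i (by omega)
  unfold Wd VTd
  simp only
  rw [dif_pos trivial, dif_neg (show ¬ (ℓ = 0) by omega), dif_pos (le_refl ℓ)]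
  by_cases hbo : hb = o
  · rw [if_pos hbo]
    have e0 : 2*i + 0 = 2*i := by omega
    rw [e0]
    rw [heven.1]
    cases hb <;> cases o <;> simp_all
  · rw [if_neg hbo]
    rw [heven.2]
    cases hb <;> cases o <;> simp_all

end Blocks

/-! ### the two counting constructions -/

lemma probe_first (P : HerProp) {N : ℕ} (G : SimpleGraph (Fin N)) (hG : G ∈ P.mem N)
    (ℓ n : ℕ) (hn : 1 ≤ n)
    (W : ℕ → Bool × Fin (ℓ+1) → Fin N) (σ : Bool × Fin (ℓ+1) → Bool × Fin (ℓ+1) → Bool)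
    (hcross : ∀ i j (χ χ' : Bool × Fin (ℓ+1)), i < j → j < n → W i χ < W j χ')
    (hcolor : ∀ i j χ χ', i < j → j < n → (G.Adj (W i χ) (W j χ') ↔ σ χ χ' = true))
    (a b b' : Bool × Fin (ℓ+1)) (hne : σ a b ≠ σ a b') :
    genFib (ℓ+1) n ≤ speed P n := by
  classical
  set vfun : (Fin (n-1) → Bool) → Fin n → Fin N := fun ω s =>
    if hs : (s : ℕ) = 0 then W 0 a
    else W (s : ℕ) (if ω ⟨(s:ℕ) - 1, by have := s.isLt; omega⟩ then b else b') with hvfun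
  have hmono : ∀ ω, StrictMono (vfun ω) := by
    intro ω s s' hss
    have h1 : (s:ℕ) < (s':ℕ) := hss
    have h2 : ¬ ((s':ℕ) = 0) := by omega
    simp only [hvfun]
    by_cases h3 : (s:ℕ) = 0
    · rw [dif_pos h3, dif_neg h2]
      exact hcross 0 (s':ℕ) _ _ (by omega) s'.isLt
    · rw [dif_neg h3, dif_neg h2]
      exact hcross _ _ _ _ h1 s'.isLt
  set F : (Fin (n-1) → Bool) → SimpleGraph (Fin n) := fun ω => G.comap (vfun ω) with hF
  have hmem : ∀ ω, F ω ∈ P.mem n := fun ω => mem_of_comap P hG _ (hmono ω)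
  have hinj : Function.Injective F := by
    intro ω ω' hFF
    funext i
    by_contra hne2
    have hi1 : (i:ℕ)+1 < n := by have := i.isLt; omega
    have hadj : ∀ (ω0 : Fin (n-1) → Bool), ((F ω0).Adj ⟨0, by omega⟩ ⟨(i:ℕ)+1, hi1⟩ ↔
        σ a (if ω0 i then b else b') = true) := by
      intro ω0
      simp only [hF, SimpleGraph.comap_adj, hvfun]
      rw [dif_pos (by trivial), dif_neg (show ¬((i:ℕ)+1 = 0) by omega)]
      have e : (⟨(i:ℕ)+1-1, by have := i.isLt; omega⟩ : Fin (n-1)) = i := by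
        apply Fin.ext <;> simp
      rw [e]
      exact hcolor 0 ((i:ℕ)+1) _ _ (by omega) hi1
    have h2' := hadj ω'
    rw [← hFF] at h2'
    have hiff := (hadj ω).symm.trans h2'
    apply hne
    cases hω : ω i <;> cases hω' : ω' i <;>
      simp [hω, hω'] at hiff hne2 <;>
      cases e1 : σ a b <;> cases e2 : σ a b' <;> simp_all
  have hsub : ∀ H ∈ (Finset.univ : Finset (Fin (n-1) → Bool)).image F, H ∈ P.mem n := by
    intro H hH
    rw [Finset.mem_image] at hH
    obtain ⟨ω, _, rfl⟩ := hH
    exact hmem ω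
  have hcard := card_le_speed P n _ hsub
  rw [Finset.card_image_of_injective _ hinj, Finset.card_univ, Fintype.card_fun,
    Fintype.card_bool, Fintype.card_fin] at hcard
  obtain ⟨m, rfl⟩ : ∃ m, n = m + 1 := ⟨n-1, by omega⟩
  calc genFib (ℓ+1) (m+1) ≤ 2^m := genFib_le_pow (ℓ+1) m
  _ ≤ speed P (m+1) := by simpa using hcard

lemma probe_last (P : HerProp) {N : ℕ} (G : SimpleGraph (Fin N)) (hG : G ∈ P.mem N)
    (ℓ n : ℕ) (hn : 1 ≤ n)
    (W : ℕ → Bool × Fin (ℓ+1) → Fin N) (σ : Bool × Fin (ℓ+1) → Bool × Fin (ℓ+1) → Bool)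
    (hcross : ∀ i j (χ χ' : Bool × Fin (ℓ+1)), i < j → j < n → W i χ < W j χ')
    (hcolor : ∀ i j χ χ', i < j → j < n → (G.Adj (W i χ) (W j χ') ↔ σ χ χ' = true))
    (a b b' : Bool × Fin (ℓ+1)) (hne : σ b a ≠ σ b' a) :
    genFib (ℓ+1) n ≤ speed P n := by
  classical
  set vfun : (Fin (n-1) → Bool) → Fin n → Fin N := fun ω s =>
    if hs : (s : ℕ) = n - 1 then W (n-1) a
    else W (s : ℕ) (if ω ⟨(s:ℕ), by have := s.isLt; omega⟩ then b else b') with hvfun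
  have hmono : ∀ ω, StrictMono (vfun ω) := by
    intro ω s s' hss
    have h1 : (s:ℕ) < (s':ℕ) := hss
    have h2 : ¬ ((s:ℕ) = n - 1) := by have := s'.isLt; omega
    simp only [hvfun]
    by_cases h3 : (s':ℕ) = n - 1
    · rw [dif_neg h2, dif_pos h3]
      exact hcross (s:ℕ) (n-1) _ _ (by omega) (by omega)
    · rw [dif_neg h2, dif_neg h3]
      exact hcross _ _ _ _ h1 s'.isLt
  set F : (Fin (n-1) → Bool) → SimpleGraph (Fin n) := fun ω => G.comap (vfun ω) with hF
  have hmem : ∀ ω, F ω ∈ P.mem n := fun ω => mem_of_comap P hG _ (hmono ω)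
  have hinj : Function.Injective F := by
    intro ω ω' hFF
    funext i
    by_contra hne2
    have hi1 : (i:ℕ) < n := by have := i.isLt; omega
    have hlast : n - 1 < n := by omega
    have hadj : ∀ (ω0 : Fin (n-1) → Bool), ((F ω0).Adj ⟨(i:ℕ), hi1⟩ ⟨n-1, hlast⟩ ↔
        σ (if ω0 i then b else b') a = true) := by
      intro ω0
      simp only [hF, SimpleGraph.comap_adj, hvfun]
      rw [dif_neg (show ¬((i:ℕ) = n - 1) by have := i.isLt; omega), dif_pos (by trivial)]
      have e : (⟨(i:ℕ), by have := i.isLt; omega⟩ : Fin (n-1)) = i := by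
        apply Fin.ext <;> simp
      rw [e]
      exact hcolor (i:ℕ) (n-1) _ _ (by have := i.isLt; omega) hlast
    have h2' := hadj ω'
    rw [← hFF] at h2'
    have hiff := (hadj ω).symm.trans h2'
    apply hne
    cases hω : ω i <;> cases hω' : ω' i <;>
      simp [hω, hω'] at hiff hne2 <;>
      cases e1 : σ b a <;> cases e2 : σ b' a <;> simp_all
  have hsub : ∀ H ∈ (Finset.univ : Finset (Fin (n-1) → Bool)).image F, H ∈ P.mem n := by
    intro H hH
    rw [Finset.mem_image] at hH
    obtain ⟨ω, _, rfl⟩ := hH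
    exact hmem ω
  have hcard := card_le_speed P n _ hsub
  rw [Finset.card_image_of_injective _ hinj, Finset.card_univ, Fintype.card_fun,
    Fintype.card_bool, Fintype.card_fin] at hcard
  obtain ⟨m, rfl⟩ : ∃ m, n = m + 1 := ⟨n-1, by omega⟩
  calc genFib (ℓ+1) (m+1) ≤ 2^m := genFib_le_pow (ℓ+1) m
  _ ≤ speed P (m+1) := by simpa using hcard

def posF (ℓ a r : ℕ) : Fin (ℓ+1) :=
  if r = 0 then ⟨0, by omega⟩ else ⟨min ℓ (ℓ+1+r-a), by omega⟩

lemma posF_lt {ℓ a r r' : ℕ} (hℓ : 1 ≤ ℓ) (hrr : r < r') (hra : r' < a) (ha : a ≤ ℓ+1) :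
    posF ℓ a r < posF ℓ a r' := by
  unfold posF
  rw [if_neg (show ¬ r' = 0 by omega)]
  by_cases h0 : r = 0
  · rw [if_pos h0, Fin.mk_lt_mk]
    omega
  · rw [if_neg h0, Fin.mk_lt_mk]
    omega

lemma posF_zero (ℓ a : ℕ) : posF ℓ a 0 = ⟨0, by omega⟩ := if_pos rfl

lemma posF_last {ℓ a : ℕ} (ha2 : 2 ≤ a) (ha : a ≤ ℓ+1) :
    posF ℓ a (a-1) = ⟨ℓ, by omega⟩ := by
  unfold posF
  rw [if_neg (show ¬ a - 1 = 0 by omega), Fin.mk_eq_mk]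
  omega

lemma abstract_count (P : HerProp) {N : ℕ} (G : SimpleGraph (Fin N)) (hG : G ∈ P.mem N)
    (ℓ n : ℕ) (hℓ : 1 ≤ ℓ) (hn : 1 ≤ n)
    (W : ℕ → Bool × Fin (ℓ+1) → Fin N) (σ : Bool × Fin (ℓ+1) → Bool × Fin (ℓ+1) → Bool)
    (hcross : ∀ i j (χ χ' : Bool × Fin (ℓ+1)), i < j → j < n → W i χ < W j χ')
    (hsame : ∀ i (hb : Bool) (p p' : Fin (ℓ+1)), i < n → p < p' → W i (hb, p) < W i (hb, p'))
    (hedge : ∀ i (hb : Bool), i < n →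
        (G.Adj (W i (hb, ⟨0, by omega⟩)) (W i (hb, ⟨ℓ, by omega⟩)) ↔ hb = true))
    (hcolor : ∀ i j χ χ', i < j → j < n → (G.Adj (W i χ) (W j χ') ↔ σ χ χ' = true)) :
    genFib (ℓ+1) n ≤ speed P n := by
  classical
  by_cases hconst : ∀ χ1 χ2 χ3 χ4, σ χ1 χ2 = σ χ3 χ4
  · -- constant colour
    obtain ⟨e, hsig⟩ : ∃ e : Bool, ∀ χ χ', σ χ χ' = e :=
      ⟨σ (false, ⟨0, by omega⟩) (false, ⟨0, by omega⟩), fun χ χ' => hconst _ _ _ _⟩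
    set vsel : List ℕ → Fin n → Fin N := fun l s =>
      W (pIdx l (s:ℕ)) (!e, posF ℓ (pSz l (s:ℕ)) (pOfs l (s:ℕ))) with hvsel
    set F : List ℕ → SimpleGraph (Fin n) := fun l => G.comap (vsel l) with hF
    have hidx_lt : ∀ (l : List ℕ), l.sum = n → (∀ x ∈ l, 0 < x) →
        ∀ s : ℕ, s < n → pIdx l s < n := by
      intro l hsum hpos s hs
      have := pIdx_lt_length l s (by omega)
      have := length_le_sum l hpos
      omega
    have hmono : ∀ l ∈ comps (ℓ+1) n, StrictMono (vsel l) := by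
      intro l hl s s' hss
      obtain ⟨hsum, hprop⟩ := comps_mem (ℓ+1) n l hl
      have hss' : (s:ℕ) < (s':ℕ) := hss
      have hs'n : (s':ℕ) < l.sum := by have := s'.isLt; omega
      simp only [hvsel]
      rcases Nat.eq_or_lt_of_le (pIdx_mono l (s:ℕ) (s':ℕ) hss'.le) with heq | hlt
      · obtain ⟨hofs, hsz⟩ := same_part l (s:ℕ) (s':ℕ) hss'.le heq
        rw [← heq, hsz]
        refine hsame _ _ _ _ (hidx_lt l hsum (fun u hu => (hprop u hu).1) _ (by have := s.isLt; omega)) ?_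
        refine posF_lt hℓ (by omega) (by rw [← hsz]; exact pOfs_lt_pSz l (s':ℕ) hs'n) ?_
        · rw [← hsz]; exact (hprop _ (pSz_mem l (s':ℕ) hs'n)).2
      · exact hcross _ _ _ _ hlt (hidx_lt l hsum (fun u hu => (hprop u hu).1) _ (by have := s'.isLt; omega))
    have hmem : ∀ l ∈ comps (ℓ+1) n, F l ∈ P.mem n :=
      fun l hl => mem_of_comap P hG _ (hmono l hl)
    -- master facts
    have master1 : ∀ (l : List ℕ), l.sum = n → (∀ x ∈ l, 0 < x) →
        ∀ s s' : ℕ, s < s' → s' < l.sum →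
        (∀ (hs : s < n) (hs' : s' < n), ((F l).Adj ⟨s, hs⟩ ⟨s', hs'⟩ ↔ e = false)) →
        pIdx l s = pIdx l s' := by
      intro l hsum hpos s s' hss hs'sum hq
      by_contra hne
      have hlt : pIdx l s < pIdx l s' :=
        lt_of_le_of_ne (pIdx_mono l s s' hss.le) hne
      have hs'n : s' < n := by omega
      have hsn : s < n := by omega
      have hadj : (F l).Adj ⟨s, hsn⟩ ⟨s', hs'n⟩ ↔ e = true := by
        simp only [hF, SimpleGraph.comap_adj, hvsel]
        rw [hcolor _ _ _ _ hlt (hidx_lt l hsum hpos s' hs'n), hsig]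
      have := hq hsn hs'n
      rw [hadj] at this
      cases e <;> simp_all
    have master2 : ∀ (l : List ℕ), l.sum = n → (∀ x ∈ l, 0 < x ∧ x ≤ ℓ+1) →
        ∀ s : ℕ, s < l.sum → pOfs l s = 0 → 2 ≤ pSz l s →
        ∀ (hs : s < n) (hs' : s + pSz l s - 1 < n),
          ((F l).Adj ⟨s, hs⟩ ⟨s + pSz l s - 1, hs'⟩ ↔ e = false) := by
      intro l hsum hprop s hssum h0 h2 hs hs'
      obtain ⟨hlt2, hidx2, hofs2, hsz2⟩ := forward l s (pSz l s - 1) hssum h0 (by omega)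
      have hae : s + pSz l s - 1 = s + (pSz l s - 1) := by omega
      have hibnd : pIdx l s < n := hidx_lt l hsum (fun u hu => (hprop u hu).1) s (by omega)
      have habnd : pSz l s ≤ ℓ+1 := (hprop _ (pSz_mem l s hssum)).2
      simp only [hF, SimpleGraph.comap_adj, hvsel]
      rw [hae, hidx2, hofs2, hsz2, h0, posF_zero, posF_last h2 habnd]
      rw [hedge _ _ hibnd]
      cases e <;> simp
    have hinj : ∀ l ∈ comps (ℓ+1) n, ∀ l' ∈ comps (ℓ+1) n, F l = F l' → l = l' := by
      intro l hl l' hl' hFF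
      obtain ⟨hsum, hprop⟩ := comps_mem (ℓ+1) n l hl
      obtain ⟨hsum', hprop'⟩ := comps_mem (ℓ+1) n l' hl'
      refine decode l (fun s s' => ∀ (hs : s < n) (hs' : s' < n),
          ((F l).Adj ⟨s, hs⟩ ⟨s', hs'⟩ ↔ e = false)) l'
        (fun u hu => (hprop u hu).1) (fun u hu => (hprop' u hu).1)
        (by omega) ?_ ?_ ?_ ?_
      · intro s s' hss hs' hq
        exact master1 l hsum (fun u hu => (hprop u hu).1) s s' hss hs' hq
      · intro s s' hss hs' hq
        refine master1 l' hsum' (fun u hu => (hprop' u hu).1) s s' hss hs' ?_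
        intro h1 h2
        rw [← hFF]
        exact hq h1 h2
      · intro s hssum h0 h2
        intro hs hs'
        exact master2 l hsum hprop s hssum h0 h2 hs hs'
      · intro s hssum h0 h2
        intro hs hs'
        rw [hFF]
        exact master2 l' hsum' hprop' s hssum h0 h2 hs hs'
    have hsub : ∀ H ∈ (comps (ℓ+1) n).image F, H ∈ P.mem n := by
      intro H hH
      rw [Finset.mem_image] at hH
      obtain ⟨l, hl, rfl⟩ := hH
      exact hmem l hl
    have hcard := card_le_speed P n _ hsub
    rw [Finset.card_image_of_injOn hinj, comps_card] at hcard
    exact hcard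
  · -- a sensitive colour exists
    push_neg at hconst
    obtain ⟨χ1, χ2, χ3, χ4, hne⟩ := hconst
    by_cases h14 : σ χ1 χ4 = σ χ1 χ2
    · exact probe_last P G hG ℓ n hn W σ hcross hcolor χ4 χ1 χ3
        (by rw [h14]; exact hne)
    · exact probe_first P G hG ℓ n hn W σ hcross hcolor χ1 χ2 χ4
        (fun hc => h14 hc.symm)

end T3X


/-- **Lemma (Type 3 forces speed `F_{n,ℓ+1}`).**  If `P` contains `(k,ℓ)`-structures of
Type 3 for arbitrarily large `k`, then `|P_n| ≥ F_{n,ℓ+1}` for every `n`. -/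
theorem type3_speed (ℓ : ℕ) (hℓ : 1 ≤ ℓ) (P : HerProp)
    (h : ∀ K : ℕ, ∃ k : ℕ, K ≤ k ∧ ∃ (N : ℕ) (G : SimpleGraph (Fin N)),
        G ∈ P.mem N ∧ HasType3 G k ℓ) :
    ∀ n : ℕ, genFib (ℓ + 1) n ≤ speed P n := by
  classical
  intro n
  obtain ⟨R, hR⟩ := T3X.ramsey_pairs
    (C := (Bool × Fin (ℓ+1)) → (Bool × Fin (ℓ+1)) → Bool) n
  obtain ⟨k, hkR, N, G, hG, x, y, z, h1, h2, h3, h4, h5, h6⟩ := h (max R 1)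
  have hk : 1 ≤ k := le_trans (le_max_right R 1) hkR
  by_cases hn : 1 ≤ n
  · -- the main case
    set o : Bool := decide (G.Adj (x (T3X.BBd k 0 hk)) (y (T3X.BBd k 0 hk))) with hoo
    have ho : (o = true) ↔ G.Adj (x (T3X.BBd k 0 hk)) (y (T3X.BBd k 0 hk)) := by
      rw [hoo, decide_eq_true_eq]
    set f : ℕ → ℕ → ((Bool × Fin (ℓ+1)) → (Bool × Fin (ℓ+1)) → Bool) := fun i j χ χ' =>
      decide (G.Adj (T3X.Wd ℓ k hk x y z o i χ) (T3X.Wd ℓ k hk x y z o j χ')) with hff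
    obtain ⟨g, σ, hgmono, hgmem, hgcol⟩ := hR f (Finset.range k)
      (by rw [Finset.card_range]; exact le_trans (le_max_left R 1) hkR)
    have hgk : ∀ i : Fin n, g i < k := fun i => Finset.mem_range.mp (hgmem i)
    set W : ℕ → Bool × Fin (ℓ+1) → Fin N := fun i χ =>
      T3X.Wd ℓ k hk x y z o (g ⟨min i (n-1), by omega⟩) χ with hWW
    have hWg : ∀ (i : ℕ) (hi : i < n) (χ : Bool × Fin (ℓ+1)),
        W i χ = T3X.Wd ℓ k hk x y z o (g ⟨i, hi⟩) χ := by
      intro i hi χ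
      have he : (⟨min i (n-1), by omega⟩ : Fin n) = ⟨i, hi⟩ := by
        apply Fin.ext
        show min i (n-1) = i
        omega
      simp only [hWW]
      rw [he]
    refine T3X.abstract_count P G hG ℓ n hℓ hn W σ ?_ ?_ ?_ ?_
    · intro i j χ χ' hij hjn
      rw [hWg i (lt_trans hij hjn) χ, hWg j hjn χ']
      refine T3X.Wd_lt_cross hk h1 h3 h4 h5 o _ _ ?_ (hgk _) χ χ'
      exact hgmono (show (⟨i, lt_trans hij hjn⟩ : Fin n) < ⟨j, hjn⟩ from by
        rw [Fin.mk_lt_mk]; omega)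
    · intro i hb p p' hin hpp
      rw [hWg i hin, hWg i hin]
      exact T3X.Wd_lt_same hk h1 h2 h3 h4 o hb _ p p' hpp
    · intro i hb hin
      rw [hWg i hin, hWg i hin]
      exact T3X.Wd_edge hk hℓ hℓ h6 o ho _ (hgk _) hb
    · intro i j χ χ' hij hjn
      rw [hWg i (lt_trans hij hjn) χ, hWg j hjn χ']
      have hcc := hgcol ⟨i, lt_trans hij hjn⟩ ⟨j, hjn⟩ (by rw [Fin.mk_lt_mk]; omega)
      have hcc2 := congrFun (congrFun hcc χ) χ'
      rw [hff] at hcc2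
      rw [← hcc2, decide_eq_true_eq]
  · -- n = 0
    have hn0 : n = 0 := by omega
    subst hn0
    rw [T3X.genFib_zero]
    have hmem := T3X.mem_of_comap P hG (fun s : Fin 0 => s.elim0) (fun s => s.elim0)
    have hpos : 0 < speed P 0 := by
      rw [speed, Set.ncard_pos (Set.toFinite _)]
      exact ⟨_, hmem⟩
    omega
end

section
/- Let P be a hereditary property of ordered graphs and let k, M ≥ 0 be integers. Suppose that for every G ∈ P, the homogeneous block sequence t_1 ≥ t_2 ≥ … of G satisfies Σ_{i=k+2}^{∞} t_i ≤ M. Then |P_n| = O(n^k) as n → ∞. -/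
open Finset

namespace PUB

variable {n : ℕ}

lemma one_le_natAbs {v x : Fin n} : 1 ≤ ((v : ℤ) - (x : ℤ)).natAbs ↔ v ≠ x := by
  rw [ne_eq, ← Fin.val_inj]
  omega

lemma lhom_iff (G : SimpleGraph (Fin n)) (x y : Fin n) :
    lHom G 1 x y ↔ ∀ v, v ≠ x → v ≠ y → (G.Adj x v ↔ G.Adj y v) := by
  unfold lHom
  constructor
  · intro h v hx hy
    exact h v (one_le_natAbs.mpr hx) (one_le_natAbs.mpr hy)
  · intro h v hx hy
    exact h v (one_le_natAbs.mp hx) (one_le_natAbs.mp hy)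

lemma cross_adj {G : SimpleGraph (Fin n)} {B : Set (Fin n)} (hB : IsHomInterval G B)
    {u u' w : Fin n} (hu : u ∈ B) (hu' : u' ∈ B) (hw : w ∉ B) :
    G.Adj u w ↔ G.Adj u' w := by
  exact (lhom_iff G u u').mp (hB.2 u hu u' hu') w
    (fun h => hw (h ▸ hu)) (fun h => hw (h ▸ hu'))

lemma key_step {G : SimpleGraph (Fin n)} {B : Set (Fin n)} (hB : IsHomInterval G B)
    {a b c : Fin n} (ha : a ∈ B) (hc : c ∈ B) (hba : b ≠ a) (hbc : b ≠ c) :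
    G.Adj a b ↔ G.Adj c b :=
  (lhom_iff G a c).mp (hB.2 a ha c hc) b hba hbc

lemma pair_adj {G : SimpleGraph (Fin n)} {B : Set (Fin n)} (hB : IsHomInterval G B)
    {u v x y : Fin n} (hu : u ∈ B) (hv : v ∈ B) (hx : x ∈ B) (hy : y ∈ B)
    (huv : u ≠ v) (hxy : x ≠ y) : G.Adj u v ↔ G.Adj x y := by
  by_cases hyv : y = v
  · subst hyv
    by_cases hxu : x = u
    · subst hxu; rfl
    · exact key_step hB hu hx (Ne.symm huv) (Ne.symm hxy)
  · by_cases hyu : y = u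
    · have hux : u ≠ x := fun h => hxy (by rw [← h, hyu])
      rw [G.adj_comm u v, hyu]
      exact key_step hB hv hx huv hux
    · have h1 : G.Adj u v ↔ G.Adj u y := by
        rw [G.adj_comm u v, G.adj_comm u y]
        exact key_step hB hv hy huv (Ne.symm hyu)
      rw [h1]
      by_cases hxu : x = u
      · subst hxu; rfl
      · exact key_step hB hu hx hyu (Ne.symm hxy)

variable {n : ℕ}

lemma lhom_symm {G : SimpleGraph (Fin n)} {x y : Fin n} (h : lHom G 1 x y) :
    lHom G 1 y x := fun v h1 h2 => (h v h2 h1).symm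

lemma blocks_eq {G : SimpleGraph (Fin n)} {B B' : Set (Fin n)}
    (h1 : IsHomBlock G B) (h2 : IsHomBlock G B') {x : Fin n}
    (hxB : x ∈ B) (hxB' : x ∈ B') : B = B' := by
  have hmix : ∀ u ∈ B, ∀ w ∈ B', lHom G 1 u w := by
    intro u hu w hw
    rw [lhom_iff]
    intro v hvu hvw
    by_cases hvx : v = x
    · rw [hvx]
      have hxu : x ≠ u := hvx ▸ hvu
      have hxw : x ≠ w := hvx ▸ hvw
      by_cases huw : u = w
      · rw [huw]
      · have s1 : G.Adj u w ↔ G.Adj x w :=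
          key_step h1.2.1 hu hxB (Ne.symm huw) (Ne.symm hxw)
        have s2 : G.Adj x u ↔ G.Adj w u :=
          key_step h2.2.1 hxB' hw (Ne.symm hxu) huw
        rw [G.adj_comm u x, s2, G.adj_comm w u, s1, G.adj_comm x w]
    · have s1 : G.Adj u v ↔ G.Adj x v := key_step h1.2.1 hu hxB hvu hvx
      have s2 : G.Adj x v ↔ G.Adj w v := key_step h2.2.1 hxB' hw hvx hvw
      rw [s1, s2]
  have hint : IsHomInterval G (B ∪ B') := by
    constructor
    · intro a b c ha hc hab hbc
      rcases ha with ha | ha <;> rcases hc with hc | hc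
      · exact Or.inl (h1.2.1.1 a b c ha hc hab hbc)
      · by_cases hbx : b ≤ x
        · exact Or.inl (h1.2.1.1 a b x ha hxB hab hbx)
        · exact Or.inr (h2.2.1.1 x b c hxB' hc (le_of_not_ge hbx) hbc)
      · by_cases hbx : b ≤ x
        · exact Or.inr (h2.2.1.1 a b x ha hxB' hab hbx)
        · exact Or.inl (h1.2.1.1 x b c hxB hc (le_of_not_ge hbx) hbc)
      · exact Or.inr (h2.2.1.1 a b c ha hc hab hbc)
    · intro u hu w hw
      rcases hu with hu | hu <;> rcases hw with hw | hw
      · exact h1.2.1.2 u hu w hw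
      · exact hmix u hu w hw
      · exact lhom_symm (hmix w hw u hu)
      · exact h2.2.1.2 u hu w hw
  exact (h1.2.2 (B ∪ B') Set.subset_union_left hint).trans
    (h2.2.2 (B ∪ B') Set.subset_union_right hint).symm

variable {n : ℕ}

def Eset (S : Finset (Set (Fin n))) : Set (Fin n) := {v | ∀ B ∈ S, v ∉ B}

noncomputable def bmin (B : Set (Fin n)) : ℕ := sInf (Fin.val '' B)

noncomputable def minsN (S : Finset (Set (Fin n))) : Finset ℕ := S.image bmin

noncomputable def Efin (S : Finset (Set (Fin n))) : Finset (Fin n) :=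
  (Set.toFinite (Eset S)).toFinset

noncomputable def Rset (S : Finset (Set (Fin n))) : Finset ℕ :=
  minsN S ∪ (Efin S).image Fin.val

noncomputable def rN (S : Finset (Set (Fin n))) (v : ℕ) : ℕ :=
  ((Rset S).filter (fun a => a ≤ v)).sup id

lemma mem_Efin {S : Finset (Set (Fin n))} {v : Fin n} :
    v ∈ Efin S ↔ v ∈ Eset S := Set.Finite.mem_toFinset _

lemma bmin_exists {B : Set (Fin n)} (hB : B.Nonempty) :
    ∃ v : Fin n, v ∈ B ∧ (v : ℕ) = bmin B := by
  have h : bmin B ∈ Fin.val '' B := Nat.sInf_mem (hB.image _)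
  obtain ⟨v, hv, he⟩ := h
  exact ⟨v, hv, he⟩

lemma bmin_le {B : Set (Fin n)} {v : Fin n} (hv : v ∈ B) : bmin B ≤ (v : ℕ) :=
  Nat.sInf_le ⟨v, hv, rfl⟩

lemma not_mem_Eset {S : Finset (Set (Fin n))} {v : Fin n} (h : v ∉ Eset S) :
    ∃ B ∈ S, v ∈ B := by
  simpa [Eset] using h

variable {G : SimpleGraph (Fin n)} {S : Finset (Set (Fin n))}

lemma mem_Rset_lt (hS : ∀ B ∈ S, IsHomBlock G B) {a : ℕ} (ha : a ∈ Rset S) :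
    a < n := by
  rcases Finset.mem_union.mp ha with h | h
  · obtain ⟨B, hB, he⟩ := Finset.mem_image.mp h
    obtain ⟨v, _, hv⟩ := bmin_exists (hS B hB).1
    rw [← he, ← hv]; exact v.isLt
  · obtain ⟨v, _, he⟩ := Finset.mem_image.mp h
    rw [← he]; exact v.isLt

lemma exists_R_le (hS : ∀ B ∈ S, IsHomBlock G B) (v : Fin n) :
    ∃ a ∈ Rset S, a ≤ (v : ℕ) := by
  by_cases hv : v ∈ Eset S
  · exact ⟨v, Finset.mem_union_right _ (Finset.mem_image.mpr ⟨v, mem_Efin.mpr hv, rfl⟩),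
      le_refl _⟩
  · obtain ⟨B, hB, hvB⟩ := not_mem_Eset hv
    exact ⟨bmin B, Finset.mem_union_left _ (Finset.mem_image.mpr ⟨B, hB, rfl⟩), bmin_le hvB⟩

lemma le_rN {a : ℕ} (ha : a ∈ Rset S) {v : ℕ} (hav : a ≤ v) : a ≤ rN S v :=
  Finset.le_sup (f := id) (Finset.mem_filter.mpr ⟨ha, hav⟩)

lemma rN_spec (hS : ∀ B ∈ S, IsHomBlock G B) (v : Fin n) :
    rN S (v : ℕ) ∈ Rset S ∧ rN S (v : ℕ) ≤ (v : ℕ) := by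
  obtain ⟨a, ha, hav⟩ := exists_R_le hS v
  have hne : ((Rset S).filter (fun a => a ≤ (v : ℕ))).Nonempty :=
    ⟨a, Finset.mem_filter.mpr ⟨ha, hav⟩⟩
  obtain ⟨b, hb, he⟩ := Finset.exists_mem_eq_sup _ hne id
  have : rN S (v : ℕ) = b := he
  rw [this]
  exact ⟨(Finset.mem_filter.mp hb).1, (Finset.mem_filter.mp hb).2⟩

lemma rN_block (hS : ∀ B ∈ S, IsHomBlock G B) {B : Set (Fin n)} (hBS : B ∈ S)
    {v : Fin n} (hv : v ∈ B) : rN S (v : ℕ) = bmin B := by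
  have hmem : bmin B ∈ Rset S := Finset.mem_union_left _ (Finset.mem_image.mpr ⟨B, hBS, rfl⟩)
  have h1 : bmin B ≤ rN S (v : ℕ) := le_rN hmem (bmin_le hv)
  obtain ⟨hR, hle⟩ := rN_spec hS v
  refine le_antisymm ?_ h1
  by_contra hlt
  push_neg at hlt
  set a := rN S (v : ℕ) with ha
  have han : a < n := mem_Rset_lt hS hR
  set va : Fin n := ⟨a, han⟩ with hva
  obtain ⟨mv, hmvB, hmv⟩ := bmin_exists (hS B hBS).1
  have hvaB : va ∈ B := by
    refine (hS B hBS).2.1.1 mv va v hmvB hv ?_ ?_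
    · show (mv : ℕ) ≤ a; omega
    · show a ≤ (v : ℕ); exact hle
  rcases Finset.mem_union.mp hR with h | h
  · obtain ⟨B', hB', he⟩ := Finset.mem_image.mp h
    obtain ⟨mv', hmv'B', hmv'⟩ := bmin_exists (hS B' hB').1
    have : mv' = va := by apply Fin.val_inj.mp; rw [hmv', he]
    have hvaB' : va ∈ B' := this ▸ hmv'B'
    have hBB' : B = B' := blocks_eq (hS B hBS) (hS B' hB') hvaB hvaB'
    rw [hBB'] at hlt
    omega
  · obtain ⟨w, hw, he⟩ := Finset.mem_image.mp h
    have : w = va := Fin.val_inj.mp he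
    exact (mem_Efin.mp hw) B hBS (this ▸ hvaB)

variable {n : ℕ}

def adjP (G : SimpleGraph (Fin n)) (a b : ℕ) : Prop :=
  ∃ (h1 : a < n) (h2 : b < n), G.Adj ⟨a, h1⟩ ⟨b, h2⟩

lemma adjP_iff (G : SimpleGraph (Fin n)) {a b : ℕ} {x y : Fin n}
    (hx : (x : ℕ) = a) (hy : (y : ℕ) = b) : adjP G a b ↔ G.Adj x y := by
  subst hx; subst hy
  constructor
  · rintro ⟨h1, h2, h⟩
    simpa using h
  · intro h
    exact ⟨x.isLt, y.isLt, by simpa using h⟩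

variable {G : SimpleGraph (Fin n)} {S : Finset (Set (Fin n))}

lemma rN_E (hS : ∀ B ∈ S, IsHomBlock G B) {v : Fin n} (hv : v ∈ Eset S) :
    rN S (v : ℕ) = (v : ℕ) := by
  refine le_antisymm (rN_spec hS v).2 (le_rN ?_ le_rfl)
  exact Finset.mem_union_right _ (Finset.mem_image.mpr ⟨v, mem_Efin.mpr hv, rfl⟩)

lemma rN_eq_block (hS : ∀ B ∈ S, IsHomBlock G B) {u v : Fin n} (huv : u ≠ v)
    (h : rN S (u : ℕ) = rN S (v : ℕ)) : ∃ B ∈ S, u ∈ B ∧ v ∈ B := by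
  by_cases hu : u ∈ Eset S
  · by_cases hv : v ∈ Eset S
    · exact absurd (Fin.val_inj.mp ((rN_E hS hu).symm.trans (h.trans (rN_E hS hv)))) huv
    · obtain ⟨B, hB, hvB⟩ := not_mem_Eset hv
      have h2 : (u : ℕ) = bmin B := (rN_E hS hu).symm.trans (h.trans (rN_block hS hB hvB))
      obtain ⟨mv, hmvB, hmv⟩ := bmin_exists (hS B hB).1
      have : mv = u := Fin.val_inj.mp (by omega)
      exact absurd (this ▸ hmvB) (hu B hB)
  · obtain ⟨B, hB, huB⟩ := not_mem_Eset hu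
    by_cases hv : v ∈ Eset S
    · have h2 : (v : ℕ) = bmin B := (rN_E hS hv).symm.trans (h.symm.trans (rN_block hS hB huB))
      obtain ⟨mv, hmvB, hmv⟩ := bmin_exists (hS B hB).1
      have : mv = v := Fin.val_inj.mp (by omega)
      exact absurd (this ▸ hmvB) (hv B hB)
    · obtain ⟨B', hB', hvB'⟩ := not_mem_Eset hv
      have h2 : bmin B = bmin B' :=
        (rN_block hS hB huB).symm.trans (h.trans (rN_block hS hB' hvB'))
      obtain ⟨mv, hmvB, hmv⟩ := bmin_exists (hS B hB).1
      obtain ⟨mv', hmvB', hmv'⟩ := bmin_exists (hS B' hB').1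
      have he : mv = mv' := Fin.val_inj.mp (by omega)
      have hBB' : B = B' := blocks_eq (hS B hB) (hS B' hB') hmvB (he ▸ hmvB')
      exact ⟨B, hB, huB, hBB' ▸ hvB'⟩

lemma decode (hS : ∀ B ∈ S, IsHomBlock G B) {u v : Fin n} (huv : u ≠ v) :
    G.Adj u v ↔ (if rN S (u : ℕ) = rN S (v : ℕ)
      then adjP G (rN S (u : ℕ)) (rN S (u : ℕ) + 1)
      else adjP G (rN S (u : ℕ)) (rN S (v : ℕ))) := by
  by_cases heq : rN S (u : ℕ) = rN S (v : ℕ)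
  · rw [if_pos heq]
    obtain ⟨B, hBS, huB, hvB⟩ := rN_eq_block hS huv heq
    have hm : rN S (u : ℕ) = bmin B := rN_block hS hBS huB
    obtain ⟨mv, hmvB, hmv⟩ := bmin_exists (hS B hBS).1
    have hz : ∃ z : Fin n, z ∈ B ∧ bmin B + 1 ≤ (z : ℕ) := by
      rcases Nat.lt_or_ge (u : ℕ) (v : ℕ) with hlt | hge
      · have := bmin_le huB; exact ⟨v, hvB, by omega⟩
      · have hne : (u : ℕ) ≠ (v : ℕ) := fun h => huv (Fin.val_inj.mp h)
        have := bmin_le hvB; exact ⟨u, huB, by omega⟩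
    obtain ⟨z, hzB, hz1⟩ := hz
    have hlt : bmin B + 1 < n := Nat.lt_of_le_of_lt hz1 z.isLt
    set w : Fin n := ⟨bmin B + 1, hlt⟩ with hw
    have hwB : w ∈ B := (hS B hBS).2.1.1 mv w z hmvB hzB (by show (mv:ℕ) ≤ bmin B + 1; omega) hz1
    have hne : mv ≠ w := by intro h; have := congrArg Fin.val h; simp [hw] at this; omega
    have hiff : G.Adj u v ↔ G.Adj mv w := pair_adj (hS B hBS).2.1 huB hvB hmvB hwB huv hne
    rw [adjP_iff G (show (mv : ℕ) = rN S (u : ℕ) by omega)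
      (show (w : ℕ) = rN S (u : ℕ) + 1 by simp [hw]; omega)]
    exact hiff
  · rw [if_neg heq]
    have haR := (rN_spec hS u).1
    have hbR := (rN_spec hS v).1
    have han : rN S (u : ℕ) < n := mem_Rset_lt hS haR
    have hbn : rN S (v : ℕ) < n := mem_Rset_lt hS hbR
    set va : Fin n := ⟨rN S (u : ℕ), han⟩ with hva
    set vb : Fin n := ⟨rN S (v : ℕ), hbn⟩ with hvb
    rw [adjP_iff G (show (va : ℕ) = rN S (u : ℕ) from rfl)
      (show (vb : ℕ) = rN S (v : ℕ) from rfl)]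
    have step1 : G.Adj u v ↔ G.Adj va v := by
      by_cases hu : u ∈ Eset S
      · have : va = u := Fin.val_inj.mp (rN_E hS hu)
        rw [this]
      · obtain ⟨B, hB, huB⟩ := not_mem_Eset hu
        have hm : rN S (u : ℕ) = bmin B := rN_block hS hB huB
        obtain ⟨mv, hmvB, hmv⟩ := bmin_exists (hS B hB).1
        have hvaB : va ∈ B := by
          have : va = mv := Fin.val_inj.mp (by simp [hva]; omega)
          rw [this]; exact hmvB
        have hvnB : v ∉ B := fun hvB => heq ((rN_block hS hB huB).trans (rN_block hS hB hvB).symm)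
        exact cross_adj (hS B hB).2.1 huB hvaB hvnB
    have step2 : G.Adj va v ↔ G.Adj va vb := by
      by_cases hv : v ∈ Eset S
      · have : vb = v := Fin.val_inj.mp (rN_E hS hv)
        rw [this]
      · obtain ⟨B', hB', hvB'⟩ := not_mem_Eset hv
        have hm' : rN S (v : ℕ) = bmin B' := rN_block hS hB' hvB'
        obtain ⟨mv', hmvB', hmv'⟩ := bmin_exists (hS B' hB').1
        have hvbB' : vb ∈ B' := by
          have : vb = mv' := Fin.val_inj.mp (by simp [hvb]; omega)
          rw [this]; exact hmvB'
        have hvaN : va ∉ B' := by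
          by_cases hu : u ∈ Eset S
          · have : va = u := Fin.val_inj.mp (rN_E hS hu)
            rw [this]; exact hu B' hB'
          · obtain ⟨B, hB, huB⟩ := not_mem_Eset hu
            have hm : rN S (u : ℕ) = bmin B := rN_block hS hB huB
            obtain ⟨mv, hmvB, hmv⟩ := bmin_exists (hS B hB).1
            have hvaB : va ∈ B := by
              have : va = mv := Fin.val_inj.mp (by simp [hva]; omega)
              rw [this]; exact hmvB
            intro hvaB'
            exact heq (by rw [rN_block hS hB huB, rN_block hS hB' hvB',
              blocks_eq (hS B hB) (hS B' hB') hvaB hvaB'])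
        rw [G.adj_comm va v, G.adj_comm va vb]
        exact cross_adj (hS B' hB').2.1 hvB' hvbB' hvaN
    rw [step1, step2]

variable {n : ℕ} {G : SimpleGraph (Fin n)} {S : Finset (Set (Fin n))}

lemma Efin_card_le {M : ℕ} (hE : (Eset S).ncard ≤ M) : (Efin S).card ≤ M := by
  rw [Efin, ← Set.ncard_eq_toFinset_card]; exact hE

lemma interval_in_E (hS : ∀ B ∈ S, IsHomBlock G B) {v : Fin n} (hv : v ∈ Eset S)
    {a : ℕ} (hmin : ∀ m ∈ minsN S, (v : ℕ) < m → a ≤ m) :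
    ∀ u : Fin n, (v : ℕ) ≤ (u : ℕ) → (u : ℕ) < a → u ∈ Eset S := by
  intro u h1 h2
  by_contra hu
  obtain ⟨B, hB, huB⟩ := not_mem_Eset hu
  have hbu : bmin B ≤ (u : ℕ) := bmin_le huB
  obtain ⟨mv, hmvB, hmv⟩ := bmin_exists (hS B hB).1
  by_cases hcase : bmin B ≤ (v : ℕ)
  · have hvB : v ∈ B := (hS B hB).2.1.1 mv v u hmvB huB (by omega) h1
    exact (hv B hB) hvB
  · have := hmin (bmin B) (Finset.mem_image.mpr ⟨B, hB, rfl⟩) (by omega)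
    omega

lemma run_card {M : ℕ} (hE : (Eset S).ncard ≤ M) {v a : ℕ}
    (hrun : ∀ u : Fin n, v ≤ (u : ℕ) → (u : ℕ) < a → u ∈ Eset S)
    (han : a ≤ n) : a - v ≤ M := by
  classical
  rcases Nat.eq_zero_or_pos (a - v) with h0 | h0
  · omega
  have hn0 : 0 < n := by omega
  have hle : (Finset.range (a - v)).card ≤ (Efin S).card := by
    apply Finset.card_le_card_of_injOn
      (fun j => if h : v + j < n then (⟨v + j, h⟩ : Fin n) else
        (⟨0, hn0⟩ : Fin n))
    · intro j hj
      rw [Finset.mem_coe, Finset.mem_range] at hj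
      have h : v + j < n := by omega
      simp only [Finset.mem_coe, dif_pos h]
      exact mem_Efin.mpr (hrun ⟨v + j, h⟩ (by simp) (by simp; omega))
    · intro j1 h1 j2 h2 he
      simp only [Finset.coe_range, Set.mem_Iio] at h1 h2
      have hj1 : v + j1 < n := by omega
      have hj2 : v + j2 < n := by omega
      simp only [dif_pos hj1, dif_pos hj2, Fin.mk.injEq] at he
      omega
  rw [Finset.card_range] at hle
  exact le_trans hle (Efin_card_le hE)

lemma cover {M : ℕ} (hS : ∀ B ∈ S, IsHomBlock G B) (hE : (Eset S).ncard ≤ M)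
    {v : Fin n} (hv : v ∈ Eset S) :
    ∃ a, (a ∈ minsN S ∨ a = n) ∧ (v : ℕ) < a ∧ a ≤ (v : ℕ) + M := by
  classical
  set A := (minsN S).filter (fun m => (v : ℕ) < m) ∪ {n} with hA
  have hAne : A.Nonempty := ⟨n, Finset.mem_union_right _ (Finset.mem_singleton_self n)⟩
  set a := A.min' hAne with ha
  have haA : a ∈ A := A.min'_mem hAne
  have han : a ≤ n := A.min'_le n (Finset.mem_union_right _ (Finset.mem_singleton_self n))
  have hva : (v : ℕ) < a := by
    rcases Finset.mem_union.mp haA with h | h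
    · exact (Finset.mem_filter.mp h).2
    · rw [Finset.mem_singleton.mp h]; exact v.isLt
  have hminle : ∀ m ∈ minsN S, (v : ℕ) < m → a ≤ m := by
    intro m hm hvm
    exact A.min'_le m (Finset.mem_union_left _ (Finset.mem_filter.mpr ⟨hm, hvm⟩))
  have hrun := interval_in_E hS hv hminle
  have hcard := run_card hE hrun han
  refine ⟨a, ?_, hva, by omega⟩
  rcases Finset.mem_union.mp haA with h | h
  · exact Or.inl (Finset.mem_filter.mp h).1
  · exact Or.inr (Finset.mem_singleton.mp h)

lemma head_le {M : ℕ} (hS : ∀ B ∈ S, IsHomBlock G B) (hE : (Eset S).ncard ≤ M)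
    {a : ℕ} (ha : a ∈ minsN S) (hmin : ∀ b ∈ minsN S, a ≤ b) : a ≤ M := by
  have han : a < n := mem_Rset_lt hS (Finset.mem_union_left _ ha)
  have hrun : ∀ u : Fin n, 0 ≤ (u : ℕ) → (u : ℕ) < a → u ∈ Eset S := by
    intro u _ hua
    by_contra hu
    obtain ⟨B, hB, huB⟩ := not_mem_Eset hu
    have := hmin (bmin B) (Finset.mem_image.mpr ⟨B, hB, rfl⟩)
    have := bmin_le huB
    omega
  have := run_card hE hrun (le_of_lt han)
  omega

noncomputable def nthR (S : Finset (Set (Fin n))) (i : ℕ) : ℕ :=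
  ((Rset S).sort (· ≤ ·)).getD i 0

lemma exists_nth {a : ℕ} (ha : a ∈ Rset S) :
    ∃ i : ℕ, i < (Rset S).card ∧ nthR S i = a := by
  have hmem : a ∈ (Rset S).sort (· ≤ ·) := (Finset.mem_sort _).mpr ha
  obtain ⟨i, hi, he⟩ := List.getElem_of_mem hmem
  refine ⟨i, by rwa [Finset.length_sort] at hi, ?_⟩
  rw [nthR, List.getD_eq_getElem _ _ hi, he]

lemma Rcard_le {k M : ℕ} (hcard : S.card ≤ k + 1) (hE : (Eset S).ncard ≤ M) :
    (Rset S).card ≤ k + M + 1 := by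
  refine le_trans (Finset.card_union_le _ _) ?_
  have h1 : (minsN S).card ≤ k + 1 := le_trans (Finset.card_image_le) hcard
  have h2 : ((Efin S).image Fin.val).card ≤ M :=
    le_trans (Finset.card_image_le) (Efin_card_le hE)
  omega

variable {n : ℕ}

noncomputable def msort (S : Finset (Set (Fin n))) : List ℕ := (minsN S).sort (· ≤ ·)

noncomputable def avals (S : Finset (Set (Fin n))) (i : ℕ) : ℕ := (msort S).getD i n

noncomputable def mheadN (M : ℕ) (S : Finset (Set (Fin n))) : ℕ :=
  min ((msort S).headD (M + 1)) (M + 1)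

noncomputable def restN (S : Finset (Set (Fin n))) (i : ℕ) : ℕ :=
  min ((msort S).getD (i + 1) n) n

def patP (S : Finset (Set (Fin n))) (i d : ℕ) : Prop :=
  ∃ w : Fin n, w ∈ Eset S ∧ (w : ℕ) + d + 1 = avals S i

lemma msort_sort (S : Finset (Set (Fin n))) : msort S = (minsN S).sort (· ≤ ·) := rfl

lemma msort_length (S : Finset (Set (Fin n))) : (msort S).length = (minsN S).card :=
  Finset.length_sort _

variable {G : SimpleGraph (Fin n)} {S : Finset (Set (Fin n))} {k M : ℕ}

lemma mem_minsN_iff (hS : ∀ B ∈ S, IsHomBlock G B) (hE : (Eset S).ncard ≤ M)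
    (hc : S.card ≤ k + 1) (a : ℕ) :
    a ∈ minsN S ↔ ((mheadN M S ≤ M ∧ a = mheadN M S) ∨
      ∃ i : Fin k, restN S (i : ℕ) = a ∧ a ≠ n) := by
  have hlen : (msort S).length ≤ k + 1 := by
    rw [msort_length]; exact le_trans (Finset.card_image_le) hc
  constructor
  · intro ha
    have hmem : a ∈ msort S := (Finset.mem_sort (α := ℕ) (· ≤ ·)).mpr ha
    obtain ⟨j, hj, he⟩ := List.getElem_of_mem hmem
    have halt : a < n := mem_Rset_lt hS (Finset.mem_union_left _ ha)
    rcases Nat.eq_zero_or_pos j with h0 | h0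
    · left
      subst h0
      have hne : (minsN S).Nonempty := ⟨a, ha⟩
      have hj' : 0 < ((minsN S).sort (· ≤ ·)).length := by rwa [msort_sort] at hj
      have hmin : (msort S)[0]'hj = (minsN S).min' hne :=
        Finset.sorted_zero_eq_min' (h := hj')
      have haM : a ≤ M := by
        refine head_le hS hE ha ?_
        intro b hb
        rw [← he, hmin]
        exact Finset.min'_le _ b hb
      have hhead : (msort S).headD (M + 1) = a := by
        rw [List.headD_eq_head?, List.head?_eq_getElem?, List.getElem?_eq_getElem hj, he]
        rfl
      refine ⟨?_, ?_⟩ <;> rw [mheadN, hhead] <;> omega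
    · right
      have hj1 : j - 1 < k := by omega
      refine ⟨⟨j - 1, hj1⟩, ?_, by omega⟩
      rw [restN]
      simp only
      have : j - 1 + 1 = j := by omega
      rw [this, List.getD_eq_getElem _ _ hj, he]
      omega
  · intro h
    rcases h with ⟨hM, ha⟩ | ⟨i, hi, han⟩
    · by_cases h0 : msort S = []
      · exfalso
        rw [mheadN, h0, List.headD_nil] at hM
        omega
      · have hne : msort S ≠ [] := h0
        have hhead : (msort S).headD (M + 1) = (msort S).head hne := by rw [List.headD_eq_head?, List.head?_eq_head hne]; rfl
        have hmem : (msort S).head hne ∈ msort S := List.head_mem hne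
        rw [mheadN, hhead] at hM ha
        have : a = (msort S).head hne := by omega
        rw [this]
        exact (Finset.mem_sort (α := ℕ) (· ≤ ·)).mp hmem
    · rw [restN] at hi
      rcases Nat.lt_or_ge ((i : ℕ) + 1) (msort S).length with hil | hil
      · rw [List.getD_eq_getElem _ _ hil] at hi
        have hmem : (msort S)[(i : ℕ) + 1] ∈ msort S := List.getElem_mem hil
        have hlt : (msort S)[(i : ℕ) + 1] < n :=
          mem_Rset_lt hS (Finset.mem_union_left _ ((Finset.mem_sort (α := ℕ) (· ≤ ·)).mp hmem))
        have : a = (msort S)[(i : ℕ) + 1] := by omega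
        rw [this]
        exact (Finset.mem_sort (α := ℕ) (· ≤ ·)).mp hmem
      · rw [List.getD_eq_default _ _ hil] at hi
        omega

lemma E_recon (hS : ∀ B ∈ S, IsHomBlock G B) (hE : (Eset S).ncard ≤ M)
    (hc : S.card ≤ k + 1) (v : Fin n) :
    v ∈ Eset S ↔ ∃ (i : Fin (k + 2)) (d : Fin (M + 1)),
      patP S (i : ℕ) (d : ℕ) ∧ (v : ℕ) + (d : ℕ) + 1 = avals S (i : ℕ) := by
  have hlen : (msort S).length ≤ k + 1 := by
    rw [msort_length]; exact le_trans (Finset.card_image_le) hc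
  constructor
  · intro hv
    obtain ⟨a, hmem, hva, haM⟩ := cover hS hE hv
    have hidx : ∃ i : Fin (k + 2), avals S (i : ℕ) = a := by
      rcases hmem with hm | hm
      · have hmm : a ∈ msort S := (Finset.mem_sort (α := ℕ) (· ≤ ·)).mpr hm
        obtain ⟨j, hj, he⟩ := List.getElem_of_mem hmm
        refine ⟨⟨j, by omega⟩, ?_⟩
        rw [avals]
        simp only
        rw [List.getD_eq_getElem _ _ hj, he]
      · refine ⟨⟨(msort S).length, by omega⟩, ?_⟩
        rw [avals]
        simp only
        rw [List.getD_eq_default _ _ le_rfl, hm]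
    obtain ⟨i, hi⟩ := hidx
    refine ⟨i, ⟨a - (v : ℕ) - 1, by omega⟩, ⟨v, hv, ?_⟩, ?_⟩ <;> simp only [hi] <;> omega
  · rintro ⟨i, d, ⟨w, hw, hwe⟩, hve⟩
    have : w = v := Fin.val_inj.mp (by omega)
    exact this ▸ hw

noncomputable def cdecide (p : Prop) : Bool := @decide p (Classical.propDecidable p)

lemma cdecide_true {p : Prop} : cdecide p = true ↔ p := by
  unfold cdecide
  exact @decide_eq_true_iff p (Classical.propDecidable p)

lemma cdecide_iff {p q : Prop} (h : cdecide p = cdecide q) : p ↔ q := by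
  rw [← cdecide_true (p := p), ← cdecide_true (p := q), h]

variable {n : ℕ}

abbrev Tenc (n k M : ℕ) : Type :=
  Fin (M + 2) × (Fin k → Fin (n + 1)) × (Fin (k + 2) → Fin (M + 1) → Bool) ×
    (Fin (k + M + 1) → Fin (k + M + 1) → Bool) × (Fin (k + M + 1) → Bool)

noncomputable def enc (k M : ℕ) (G : SimpleGraph (Fin n)) (S : Finset (Set (Fin n))) :
    Tenc n k M :=
  ⟨⟨mheadN M S, by unfold mheadN; omega⟩,
   fun i => ⟨restN S (i : ℕ), by unfold restN; omega⟩,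
   fun i d => cdecide (patP S (i : ℕ) (d : ℕ)),
   fun a b => cdecide (adjP G (nthR S (a : ℕ)) (nthR S (b : ℕ))),
   fun a => cdecide (adjP G (nthR S (a : ℕ)) (nthR S (a : ℕ) + 1))⟩

lemma enc_inj {k M : ℕ} {G G' : SimpleGraph (Fin n)} {S S' : Finset (Set (Fin n))}
    (hS : ∀ B ∈ S, IsHomBlock G B) (hc : S.card ≤ k + 1) (hE : (Eset S).ncard ≤ M)
    (hS' : ∀ B ∈ S', IsHomBlock G' B) (hc' : S'.card ≤ k + 1) (hE' : (Eset S').ncard ≤ M)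
    (henc : enc k M G S = enc k M G' S') : G = G' := by
  rw [enc, enc, Prod.mk.injEq, Prod.mk.injEq, Prod.mk.injEq, Prod.mk.injEq] at henc
  obtain ⟨e1, e2, e3, e4, e5⟩ := henc
  have hh : mheadN M S = mheadN M S' := congrArg Fin.val e1
  have hrest : ∀ i : Fin k, restN S (i : ℕ) = restN S' (i : ℕ) := fun i =>
    congrArg Fin.val (congrFun e2 i)
  have hmins : minsN S = minsN S' := by
    ext a
    rw [mem_minsN_iff hS hE hc a, mem_minsN_iff hS' hE' hc' a, hh]
    constructor <;> rintro (h | ⟨i, hi⟩) <;>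
      [exact Or.inl h; exact Or.inr ⟨i, (hrest i) ▸ hi⟩;
       exact Or.inl h; exact Or.inr ⟨i, (hrest i).symm ▸ hi⟩]
  have hmsort : msort S = msort S' := by rw [msort_sort, msort_sort, hmins]
  have havals : ∀ i : ℕ, avals S i = avals S' i := by
    intro i; rw [avals, avals, hmsort]
  have hpat : ∀ (i : Fin (k + 2)) (d : Fin (M + 1)),
      patP S (i : ℕ) (d : ℕ) ↔ patP S' (i : ℕ) (d : ℕ) := fun i d =>
    cdecide_iff (congrFun (congrFun e3 i) d)
  have hEset : Eset S = Eset S' := by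
    ext v
    rw [E_recon hS hE hc v, E_recon hS' hE' hc' v]
    constructor <;> rintro ⟨i, d, hp, he⟩
    · exact ⟨i, d, (hpat i d).mp hp, by rw [← havals]; exact he⟩
    · exact ⟨i, d, (hpat i d).mpr hp, by rw [havals]; exact he⟩
  have hEfin : Efin S = Efin S' := by
    ext v
    rw [mem_Efin, mem_Efin, hEset]
  have hR : Rset S = Rset S' := by rw [Rset, Rset, hmins, hEfin]
  have hr : ∀ x : ℕ, rN S x = rN S' x := by intro x; rw [rN, rN, hR]
  have hnth : ∀ i : ℕ, nthR S i = nthR S' i := by intro i; rw [nthR, nthR, hR]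
  have hRcard : (Rset S).card ≤ k + M + 1 := Rcard_le hc hE
  ext u v
  by_cases huv : u = v
  · subst huv; simp
  · rw [decode hS huv, decode hS' huv, hr (u : ℕ), hr (v : ℕ)]
    by_cases heq : rN S' (u : ℕ) = rN S' (v : ℕ)
    · rw [if_pos heq, if_pos heq]
      have haR : rN S' (u : ℕ) ∈ Rset S := by
        rw [← hr (u : ℕ)]; exact (rN_spec hS u).1
      obtain ⟨i, hi, hie⟩ := exists_nth haR
      have hi' : i < k + M + 1 := lt_of_lt_of_le hi hRcard
      have hiff := cdecide_iff (congrFun e5 ⟨i, hi'⟩)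
      simp only [Fin.val_mk] at hiff
      rw [← hnth i, hie] at hiff
      exact hiff
    · rw [if_neg heq, if_neg heq]
      have haR : rN S' (u : ℕ) ∈ Rset S := by
        rw [← hr (u : ℕ)]; exact (rN_spec hS u).1
      have hbR : rN S' (v : ℕ) ∈ Rset S := by
        rw [← hr (v : ℕ)]; exact (rN_spec hS v).1
      obtain ⟨i, hi, hie⟩ := exists_nth haR
      obtain ⟨j, hj, hje⟩ := exists_nth hbR
      have hi' : i < k + M + 1 := lt_of_lt_of_le hi hRcard
      have hj' : j < k + M + 1 := lt_of_lt_of_le hj hRcard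
      have hiff := cdecide_iff (congrFun (congrFun e4 ⟨i, hi'⟩) ⟨j, hj'⟩)
      simp only [Fin.val_mk] at hiff
      rw [← hnth i, ← hnth j, hie, hje] at hiff
      exact hiff

lemma card_Tenc (n k M : ℕ) :
    Fintype.card (Tenc n k M) = (M + 2) * ((n + 1) ^ k *
      ((2 ^ (M + 1)) ^ (k + 2) * ((2 ^ (k + M + 1)) ^ (k + M + 1) * 2 ^ (k + M + 1)))) := by
  simp [Tenc, Fintype.card_fun]

lemma card_bound (n k M : ℕ) (hn : 1 ≤ n) :
    Fintype.card (Tenc n k M) ≤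
      ((M + 2) * (2 ^ (M + 1)) ^ (k + 2) * (2 ^ (k + M + 1)) ^ (k + M + 1) *
        2 ^ (k + M + 1) * 2 ^ k) * n ^ k := by
  rw [card_Tenc]
  have h1 : (n + 1) ^ k ≤ 2 ^ k * n ^ k := by
    rw [← mul_pow]
    exact Nat.pow_le_pow_left (by omega) k
  set Y := (2 ^ (M + 1)) ^ (k + 2) * ((2 ^ (k + M + 1)) ^ (k + M + 1) * 2 ^ (k + M + 1)) with hY
  have h2 : (M + 2) * ((n + 1) ^ k * Y) ≤ (M + 2) * ((2 ^ k * n ^ k) * Y) :=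
    Nat.mul_le_mul_left _ (Nat.mul_le_mul_right _ h1)
  refine le_trans h2 (le_of_eq ?_)
  rw [hY]; ring

end PUB

/-- **Lemma (polynomial upper bound).**  If the homogeneous block sequence of every
`G ∈ P` satisfies `Σ_{i=k+2}^∞ t_i ≤ M`, then `|P_n| = O(n^k)`. -/
theorem poly_upper_bound (P : HerProp) (k M : ℕ)
    (h : ∀ (N : ℕ) (G : SimpleGraph (Fin N)), G ∈ P.mem N → TailBound G k M) :
    ∃ C : ℕ, ∀ n : ℕ, 1 ≤ n → speed P n ≤ C * n ^ k := by

  classical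
  refine ⟨(M + 2) * (2 ^ (M + 1)) ^ (k + 2) * (2 ^ (k + M + 1)) ^ (k + M + 1) *
    2 ^ (k + M + 1) * 2 ^ k, ?_⟩
  intro n hn
  have hTB : ∀ G ∈ P.mem n, TailBound G k M := fun G hG => h n G hG
  have hdef : PUB.Tenc n k M := ⟨⟨0, by omega⟩, fun _ => ⟨0, by omega⟩,
    fun _ _ => false, fun _ _ => false, fun _ => false⟩
  set f : SimpleGraph (Fin n) → PUB.Tenc n k M := fun G =>
    if hG : TailBound G k M then PUB.enc k M G hG.choose else hdef with hf
  have hinj : Set.InjOn f (P.mem n) := by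
    intro G hG G' hG' hfe
    have tG := hTB G hG
    have tG' := hTB G' hG'
    simp only [hf, dif_pos tG, dif_pos tG'] at hfe
    obtain ⟨c1, b1, e1⟩ := tG.choose_spec
    obtain ⟨c1', b1', e1'⟩ := tG'.choose_spec
    exact PUB.enc_inj b1 c1 e1 b1' c1' e1' hfe
  have key : speed P n ≤ Fintype.card (PUB.Tenc n k M) := by
    have h1 : (P.mem n).ncard ≤ (Set.univ : Set (PUB.Tenc n k M)).ncard :=
      Set.ncard_le_ncard_of_injOn f (fun a _ => Set.mem_univ _) hinj Set.finite_univ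
    rw [Set.ncard_univ, Nat.card_eq_fintype_card] at h1
    exact h1
  exact le_trans key (PUB.card_bound n k M hn)
end

section
/- Let n, k ∈ ℕ with k ≤ n. If G is an irreducible ordered graph of order n, then G has an irreducible induced ordered subgraph of order k. -/
open Finset

section AuxIrred

variable {n : ℕ} (G : SimpleGraph (Fin n))

/-- Auxiliary inductive predicate: `b` is reachable by a greedy chain of edges
starting with an edge at vertex `0`. -/
inductive MyChain : Fin n → Prop
  | base (i j : Fin n) : G.Adj i j → (i : ℕ) = 0 → MyChain j
  | step (b' b i : Fin n) : MyChain b' → G.Adj i b → i ≤ b' → b' < b → MyChain b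

/-- `S` has every consecutive gap crossed by an edge with both ends in `S`. -/
def CovCon (S : Finset (Fin n)) : Prop :=
  ∀ a c : Fin n, a ∈ S → c ∈ S → a < c → (∀ x ∈ S, x ≤ a ∨ c ≤ x) →
    ∃ i j : Fin n, i ∈ S ∧ j ∈ S ∧ G.Adj i j ∧ i ≤ a ∧ c ≤ j

lemma mychain_pos {b : Fin n} (h : MyChain G b) : 1 ≤ (b : ℕ) := by
  induction h with
  | base i j hadj hi =>
    have hne : j ≠ i := hadj.symm.ne
    have : (j : ℕ) ≠ (i : ℕ) := fun hc => hne (Fin.ext hc)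
    omega
  | step b' b i hb' hadj hle hlt ih =>
    have : (b' : ℕ) < (b : ℕ) := hlt
    omega

lemma gap_exists (hG : IrredGraph G) (u : Fin n) (hu : (u : ℕ) + 1 < n) :
    ∃ i j : Fin n, G.Adj i j ∧ (i : ℕ) ≤ (u : ℕ) ∧ (u : ℕ) < (j : ℕ) := by
  unfold IrredGraph at hG
  push_neg at hG
  obtain ⟨i, j, hij, hadj, h1, h2⟩ := hG u ⟨(u : ℕ) + 1, hu⟩
    (by simp [Fin.lt_def])
  refine ⟨i, j, hadj, ?_, h1⟩
  have h2' : (i : ℕ) < (u : ℕ) + 1 := by simpa using h2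
  omega

lemma mychain_main (hG : IrredGraph G) {b : Fin n} (hb : MyChain G b) :
    ∀ k : ℕ, 2 ≤ k → k ≤ (b : ℕ) + 1 →
      ∃ S : Finset (Fin n), S.card = k ∧ (∀ x ∈ S, x ≤ b) ∧ CovCon G S := by
  induction hb with
  | base i j hadj hi =>
    intro k hk2 hkb
    have hij : (i : ℕ) < (j : ℕ) := by
      have hne : (j : ℕ) ≠ (i : ℕ) := fun hc => hadj.symm.ne (Fin.ext hc)
      omega
    have hijne : i ≠ j := fun hc => hadj.ne hc
    have hcard2 : ({i, j} : Finset (Fin n)).card = 2 := Finset.card_pair hijne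
    have hsub : ({i, j} : Finset (Fin n)) ⊆ Finset.Iic j := by
      intro x hx
      rcases Finset.mem_insert.mp hx with h | h
      · subst h; exact Finset.mem_Iic.mpr (le_of_lt (by exact hij))
      · simp at h; subst h; exact Finset.mem_Iic.mpr le_rfl
    obtain ⟨S, hS1, hS2, hS3⟩ : ∃ C, ({i, j} : Finset (Fin n)) ⊆ C ∧ C ⊆ Finset.Iic j ∧
        C.card = (k - 2) + ({i, j} : Finset (Fin n)).card :=
      Finset.exists_subsuperset_card_eq hsub (by rw [hcard2]; omega)
        (by rw [hcard2, Fin.card_Iic]; omega)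
    rw [hcard2] at hS3
    refine ⟨S, by omega, fun x hx => Finset.mem_Iic.mp (hS2 hx), ?_⟩
    intro a c ha hc hac hcons
    refine ⟨i, j, hS1 (by simp), hS1 (by simp), hadj, ?_, ?_⟩
    · exact (Fin.le_def).mpr (by omega)
    · exact Finset.mem_Iic.mp (hS2 hc)
  | step b' b i0 hb' hadj hi0 hb'b IH =>
    intro k hk2 hkb
    by_cases hcase : k ≤ (b' : ℕ) + 1
    · obtain ⟨S, h1, h2, h3⟩ := IH k hk2 hcase
      exact ⟨S, h1, fun x hx => le_trans (h2 x hx) hb'b.le, h3⟩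
    · have hb'1 : 1 ≤ (b' : ℕ) := mychain_pos G hb'
      obtain ⟨S', h1, h2, h3⟩ := IH ((b' : ℕ) + 1) (by omega) le_rfl
      have hS' : S' = Finset.Iic b' := by
        apply Finset.eq_of_subset_of_card_le
        · exact fun x hx => Finset.mem_Iic.mpr (h2 x hx)
        · rw [h1, Fin.card_Iic]
      have hblt : (b' : ℕ) < (b : ℕ) := hb'b
      obtain ⟨W, hW1, hW2⟩ := Finset.exists_subset_card_eq (s := Finset.Ioo b' b)
        (n := k - ((b' : ℕ) + 2)) (by rw [Fin.card_Ioo]; omega)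
      refine ⟨insert b (Finset.Iic b' ∪ W), ?_, ?_, ?_⟩
      · -- cardinality
        have hbnot : b ∉ Finset.Iic b' ∪ W := by
          intro hmem
          rcases Finset.mem_union.mp hmem with h | h
          · exact absurd (Finset.mem_Iic.mp h) (not_le.mpr hb'b)
          · have := Finset.mem_Ioo.mp (hW1 h)
            exact absurd this.2 (lt_irrefl b)
        have hdisj : Disjoint (Finset.Iic b') W := by
          refine Finset.disjoint_left.mpr fun x hx hxW => ?_
          have h1x := Finset.mem_Iic.mp hx
          have h2x := (Finset.mem_Ioo.mp (hW1 hxW)).1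
          exact absurd (lt_of_le_of_lt h1x h2x) (lt_irrefl x)
        rw [Finset.card_insert_of_notMem hbnot, Finset.card_union_of_disjoint hdisj,
          Fin.card_Iic, hW2]
        omega
      · -- bound
        intro x hx
        rcases Finset.mem_insert.mp hx with h | h
        · subst h; exact le_rfl
        · rcases Finset.mem_union.mp h with h | h
          · exact le_trans (Finset.mem_Iic.mp h) hb'b.le
          · exact le_of_lt (Finset.mem_Ioo.mp (hW1 h)).2
      · -- CovCon
        intro a c ha hc hac hcons
        by_cases hc' : c ≤ b'
        · have haIic : a ∈ Finset.Iic b' := Finset.mem_Iic.mpr (le_trans hac.le hc')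
          have hcIic : c ∈ Finset.Iic b' := Finset.mem_Iic.mpr hc'
          rw [hS'] at h3
          obtain ⟨i, j, hiS, hjS, hij, hile, hjle⟩ := h3 a c haIic hcIic hac
            (fun x hx => hcons x (Finset.mem_insert_of_mem (Finset.mem_union_left _ hx)))
          exact ⟨i, j, Finset.mem_insert_of_mem (Finset.mem_union_left _ hiS),
            Finset.mem_insert_of_mem (Finset.mem_union_left _ hjS), hij, hile, hjle⟩
        · have hb'S : b' ∈ insert b (Finset.Iic b' ∪ W) :=
            Finset.mem_insert_of_mem (Finset.mem_union_left _ (Finset.mem_Iic.mpr le_rfl))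
          have hba : b' ≤ a := by
            rcases hcons b' hb'S with h | h
            · exact h
            · exact absurd h hc'
          have hcleb : c ≤ b := by
            rcases Finset.mem_insert.mp hc with h | h
            · subst h; exact le_rfl
            · rcases Finset.mem_union.mp h with h | h
              · exact le_trans (Finset.mem_Iic.mp h) hb'b.le
              · exact le_of_lt (Finset.mem_Ioo.mp (hW1 h)).2
          refine ⟨i0, b, Finset.mem_insert_of_mem
            (Finset.mem_union_left _ (Finset.mem_Iic.mpr hi0)),
            Finset.mem_insert_self _ _, hadj, le_trans hi0 hba, hcleb⟩

lemma mychain_last (hG : IrredGraph G) (hn : 2 ≤ n) :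
    ∃ b : Fin n, MyChain G b ∧ (b : ℕ) = n - 1 := by
  have hstart : ∃ b : Fin n, MyChain G b := by
    obtain ⟨i, j, hadj, hile, hlt⟩ := gap_exists G hG ⟨0, by omega⟩ (by simp; omega)
    exact ⟨j, MyChain.base i j hadj (by simpa using hile)⟩
  obtain ⟨b0, hb0⟩ := hstart
  suffices H : ∀ m : ℕ, ∀ b : Fin n, MyChain G b → n - 1 - (b : ℕ) ≤ m →
      ∃ c : Fin n, MyChain G c ∧ (c : ℕ) = n - 1 by
    exact H (n - 1 - (b0 : ℕ)) b0 hb0 le_rfl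
  intro m
  induction m with
  | zero =>
    intro b hb hle
    have hbl : (b : ℕ) < n := b.isLt
    exact ⟨b, hb, by omega⟩
  | succ m ih =>
    intro b hb hle
    by_cases hE : (b : ℕ) = n - 1
    · exact ⟨b, hb, hE⟩
    · have hbl : (b : ℕ) < n := b.isLt
      obtain ⟨i, j, hadj, hile, hlt⟩ := gap_exists G hG b (by omega)
      have hj : MyChain G j := MyChain.step b j i hb hadj
        ((Fin.le_def).mpr hile) ((Fin.lt_def).mpr hlt)
      exact ih j hj (by omega)

end AuxIrred

/-- **Observation.**  An irreducible ordered graph of order `n` has an irreducible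
induced ordered subgraph of every order `k ≤ n`. -/
theorem irreducible_subgraph_of_irreducible (n k : ℕ) (hk : k ≤ n)
    (G : SimpleGraph (Fin n)) (hG : IrredGraph G) :
    ∃ H : SimpleGraph (Fin k), IrredGraph H ∧ IndSub H G := by
  rcases le_or_gt k 1 with hk1 | hk1
  · -- trivial cases k = 0, 1
    refine ⟨⊥, ?_, ?_⟩
    · rintro ⟨u, v, huv, -⟩
      have h1 : (u : ℕ) < (v : ℕ) := huv
      have h2 : (v : ℕ) < k := v.isLt
      omega
    · refine ⟨Fin.castLEOrderEmb hk, fun i j => ?_⟩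
      have hij : i = j := by
        apply Fin.ext
        have h1 : (i : ℕ) < k := i.isLt
        have h2 : (j : ℕ) < k := j.isLt
        omega
      subst hij
      simp
  · -- main case k ≥ 2
    have hn2 : 2 ≤ n := le_trans hk1 hk
    obtain ⟨b, hb, hbval⟩ := mychain_last G hG hn2
    obtain ⟨S, hScard, hSbound, hScov⟩ := mychain_main G hG hb k hk1 (by omega)
    have hScard' : S.card = k := hScard
    let e : Fin k ≃o {x // x ∈ S} := S.orderIsoOfFin hScard'
    let φ : Fin k ↪o Fin n := e.toOrderEmbedding.trans (OrderEmbedding.subtype _)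
    have hφmem : ∀ a : Fin k, φ a ∈ S := fun a => (e a).2
    refine ⟨SimpleGraph.comap (φ : Fin k → Fin n) G, ?_, ⟨φ, fun i j => Iff.rfl⟩⟩
    rintro ⟨u, v, huv, hsep⟩
    have huk : (u : ℕ) + 1 < k := by
      have h1 : (u : ℕ) < (v : ℕ) := huv
      have h2 : (v : ℕ) < k := v.isLt
      omega
    set u' : Fin k := ⟨(u : ℕ) + 1, by omega⟩ with hu'
    have huu' : u < u' := by
      rw [Fin.lt_def]; simp [hu']
    have hφlt : φ u < φ u' := φ.lt_iff_lt.mpr huu'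
    have hcons : ∀ x ∈ S, x ≤ φ u ∨ φ u' ≤ x := by
      intro x hx
      set a : Fin k := e.symm ⟨x, hx⟩ with ha
      have hxa : φ a = x := by
        simp [φ, ha, OrderEmbedding.subtype]; rfl
      rcases le_or_gt a u with h | h
      · left; rw [← hxa]; exact φ.le_iff_le.mpr h
      · right; rw [← hxa]
        apply φ.le_iff_le.mpr
        rw [Fin.le_def]
        have : (u : ℕ) < (a : ℕ) := h
        simp [hu']; omega
    obtain ⟨i, j, hiS, hjS, hadj, hile, hjle⟩ :=
      hScov (φ u) (φ u') (hφmem u) (hφmem u') hφlt hcons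
    set a : Fin k := e.symm ⟨i, hiS⟩ with hadef
    set c : Fin k := e.symm ⟨j, hjS⟩ with hcdef
    have hφa : φ a = i := by simp [φ, hadef, OrderEmbedding.subtype]; rfl
    have hφc : φ c = j := by simp [φ, hcdef, OrderEmbedding.subtype]; rfl
    have hij : i < j := lt_of_le_of_lt hile (lt_of_lt_of_le hφlt hjle)
    have hac : a < c := by
      apply φ.lt_iff_lt.mp
      rw [hφa, hφc]; exact hij
    have hau : a ≤ u := by
      apply φ.le_iff_le.mp
      rw [hφa]; exact hile
    have hcu : u' ≤ c := by
      apply φ.le_iff_le.mp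
      rw [hφc]; exact hjle
    have hHadj : (SimpleGraph.comap (φ : Fin k → Fin n) G).Adj a c := by
      change G.Adj (φ a) (φ c)
      rw [hφa, hφc]; exact hadj
    rcases hsep a c hac hHadj with h | h
    · have h1 : (u : ℕ) + 1 ≤ (c : ℕ) := hcu
      have h2 : (a : ℕ) ≤ (u : ℕ) := hau
      have h3 : (a : ℕ) < (c : ℕ) := hac
      omega
    · have h1 : (a : ℕ) ≤ (u : ℕ) := hau
      have h2 : (u : ℕ) < (v : ℕ) := huv
      omega
end
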